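/- arXiv:math/0309109 — 8 statements merged into one kernel-verified Lean document; each statement's English description precedes it below -/
import Mathlib

section
/- Let Q be a positive definite quadratic form on Z^r, and suppose Q(x) ≥ c₁ > 0 for all nonzero x ∈ Z^r. Then the number of x ∈ Z^r with Q(x) ≤ c₂ is at most (1 + 2√(c₂/c₁))^r. -/
/-!
By Sylvester's law of inertia a positive definite `Q` is `‖L ·‖²` for a linear isomorphism `L`
onto Euclidean space. The integer points with `Q ≤ c₂` are then sent to points of the ball of
radius `√c₂` at mutual distance at least `√c₁`, so the balls of radius `√c₁ / 2` around them are
disjoint and lie in the ball of radius `√c₂ + √c₁ / 2`; comparing Haar volumes bounds their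
number by `((√c₂ + √c₁ / 2) / (√c₁ / 2)) ^ r = (1 + 2 √(c₂ / c₁)) ^ r`.
-/

open MeasureTheory Metric Module
open scoped ENNReal

theorem Finset.card_le_of_norm_le_of_separated {α E : Type*} [NormedAddCommGroup E]
    [NormedSpace ℝ E] [FiniteDimensional ℝ E] (t : Finset α) (f : α → E) {R d : ℝ}
    (hR : 0 ≤ R) (hd : 0 < d) (hf : ∀ x ∈ t, ‖f x‖ ≤ R)
    (hsep : ∀ x ∈ t, ∀ y ∈ t, x ≠ y → d ≤ ‖f x - f y‖) :
    (t.card : ℝ) ≤ (1 + 2 * R / d) ^ finrank ℝ E := by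
  borelize E
  set μ : Measure E := Measure.addHaar
  set n := finrank ℝ E with hn
  have hd2 : 0 < d / 2 := half_pos hd
  have hdisj : (t : Set α).PairwiseDisjoint fun x => ball (f x) (d / 2) := by
    intro x hx y hy hxy
    apply ball_disjoint_ball
    rw [add_halves, dist_eq_norm]
    exact hsep x hx y hy hxy
  have hsub : (⋃ x ∈ t, ball (f x) (d / 2)) ⊆ ball 0 (R + d / 2) := by
    refine Set.iUnion₂_subset fun x hx => ball_subset_ball' ?_
    rw [dist_zero_right]
    linarith [hf x hx]
  have hvol : (t.card : ℝ≥0∞) * ENNReal.ofReal ((d / 2) ^ n) * μ (ball 0 1)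
      ≤ ENNReal.ofReal ((R + d / 2) ^ n) * μ (ball 0 1) :=
    calc (t.card : ℝ≥0∞) * ENNReal.ofReal ((d / 2) ^ n) * μ (ball 0 1)
        = μ (⋃ x ∈ t, ball (f x) (d / 2)) := by
          rw [measure_biUnion_finset hdisj fun x _ => measurableSet_ball]
          simp only [μ.addHaar_ball_of_pos _ hd2, Finset.sum_const, nsmul_eq_mul, mul_assoc, ← hn]
      _ ≤ μ (ball 0 (R + d / 2)) := measure_mono hsub
      _ = ENNReal.ofReal ((R + d / 2) ^ n) * μ (ball 0 1) := μ.addHaar_ball_of_pos _ (by linarith)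
  have hcard : (t.card : ℝ) * (d / 2) ^ n ≤ (R + d / 2) ^ n := by
    rw [ENNReal.mul_le_mul_iff_left (measure_ball_pos μ _ one_pos).ne' measure_ball_lt_top.ne,
      ← ENNReal.ofReal_natCast, ← ENNReal.ofReal_mul (Nat.cast_nonneg _),
      ENNReal.ofReal_le_ofReal_iff (by positivity)] at hvol
    exact hvol
  calc (t.card : ℝ) ≤ (R + d / 2) ^ n / (d / 2) ^ n := by rwa [le_div_iff₀ (by positivity)]
    _ = (1 + 2 * R / d) ^ n := by rw [← div_pow]; congr 1; field_simp; ring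

theorem Set.finite_and_ncard_le_of_forall_finset_card_le {α : Type*} {s : Set α} {B : ℝ}
    (h : ∀ t : Finset α, ↑t ⊆ s → (t.card : ℝ) ≤ B) : s.Finite ∧ (s.ncard : ℝ) ≤ B := by
  have hfin : s.Finite := by
    by_contra hinf
    obtain ⟨t, hts, htc⟩ := Set.Infinite.exists_subset_card_eq hinf (⌊B⌋₊ + 1)
    have := h t hts
    rw [htc, Nat.cast_add_one] at this
    linarith [Nat.lt_floor_add_one B]
  refine ⟨hfin, ?_⟩
  rw [Set.ncard_eq_toFinset_card s hfin]
  exact h _ (by simp)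

theorem QuadraticMap.PosDef.exists_linearEquiv_euclideanSpace {V : Type*} [AddCommGroup V]
    [Module ℝ V] [FiniteDimensional ℝ V] {Q : QuadraticForm ℝ V} (hQ : Q.PosDef) :
    ∃ L : V ≃ₗ[ℝ] EuclideanSpace ℝ (Fin (finrank ℝ V)), ∀ v, Q v = ‖L v‖ ^ 2 := by
  obtain ⟨w, hw, ⟨F⟩⟩ := Q.equivalent_one_neg_one_weighted_sum_squared
    (QuadraticMap.separatingLeft_of_anisotropic Q hQ.anisotropic)
  have hw_one : ∀ i, w i = 1 := by
    intro i
    have hpos : 0 < Q (F.symm (Pi.single i 1)) := hQ _ (by simp)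
    rw [F.symm.map_app, QuadraticMap.weightedSumSquares_apply,
      Finset.sum_eq_single i (fun j _ hj => by simp [Pi.single_eq_of_ne hj]) (by simp)] at hpos
    simp only [Pi.single_eq_same] at hpos
    exact (hw i).resolve_left (by intro h; rw [h] at hpos; norm_num at hpos)
  refine ⟨F.toLinearEquiv.trans (WithLp.linearEquiv 2 ℝ _).symm, fun v => ?_⟩
  rw [EuclideanSpace.real_norm_sq_eq, ← F.map_app v, QuadraticMap.weightedSumSquares_apply]
  simp [hw_one, ← pow_two]

theorem stmt0_general (r : ℕ) (Q : QuadraticForm ℝ (Fin r → ℝ)) (hQ : Q.PosDef)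
    (c₁ c₂ : ℝ) (hc₁ : 0 < c₁)
    (hlow : ∀ x : Fin r → ℤ, x ≠ 0 → c₁ ≤ Q (fun i => (x i : ℝ))) :
    {x : Fin r → ℤ | Q (fun i => (x i : ℝ)) ≤ c₂}.Finite ∧
      ({x : Fin r → ℤ | Q (fun i => (x i : ℝ)) ≤ c₂}.ncard : ℝ)
        ≤ (1 + 2 * Real.sqrt (c₂ / c₁)) ^ r := by
  obtain ⟨L, hL⟩ := hQ.exists_linearEquiv_euclideanSpace
  set ι : (Fin r → ℤ) →+ (Fin r → ℝ) := AddMonoidHom.compLeft (Int.castAddHom ℝ) (Fin r)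
  have hdim : finrank ℝ (EuclideanSpace ℝ (Fin (finrank ℝ (Fin r → ℝ)))) = r := by simp
  rw [Real.sqrt_div' _ hc₁.le, ← mul_div_assoc]
  refine Set.finite_and_ncard_le_of_forall_finset_card_le fun t ht =>
    (t.card_le_of_norm_le_of_separated (fun x => L (ι x)) (Real.sqrt_nonneg c₂)
      (Real.sqrt_pos.2 hc₁) (fun x hx => ?_) (fun x _ y _ hxy => ?_)).trans_eq (by rw [hdim])
  · rw [← Real.sqrt_sq (norm_nonneg _), ← hL]
    exact Real.sqrt_le_sqrt (ht hx)
  · rw [← map_sub, ← map_sub, ← Real.sqrt_sq (norm_nonneg _), ← hL]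
    exact Real.sqrt_le_sqrt (hlow _ (sub_ne_zero.2 hxy))

/-- Let `Q` be a positive definite quadratic form on `ℤ^r` (i.e. the
restriction to integer vectors of a positive definite real quadratic form), and suppose
`Q x ≥ c₁ > 0` for all nonzero integer vectors `x`. Then the number of integer vectors `x`
with `Q x ≤ c₂` is at most `(1 + 2√(c₂/c₁))^r`. -/
theorem stmt0 (r : ℕ) (Q : QuadraticForm ℝ (Fin r → ℝ)) (hQ : Q.PosDef)
    (c₁ c₂ : ℝ) (hc₁ : 0 < c₁) (hc₂ : 0 < c₂)
    (hlow : ∀ x : Fin r → ℤ, x ≠ 0 → c₁ ≤ Q (fun i => (x i : ℝ))) :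
    {x : Fin r → ℤ | Q (fun i => (x i : ℝ)) ≤ c₂}.Finite ∧
      ({x : Fin r → ℤ | Q (fun i => (x i : ℝ)) ≤ c₂}.ncard : ℝ)
        ≤ (1 + 2 * Real.sqrt (c₂ / c₁)) ^ r :=
  stmt0_general r Q hQ c₁ c₂ hc₁ hlow
end

section
/- Let f ∈ ℤ[x,z] be a homogeneous polynomial of nonzero discriminant. There is a constant C_f such that for every integer N > C_f and every prime p > N, the number of pairs (x,z) ∈ ℤ² with |x|, |z| ≤ N, gcd(x,z) = 1 and p² | f(x,z) is at most 12·deg(f). -/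
open scoped BigOperators

open scoped BigOperators
open Polynomial


private lemma exists_int_poly (r : Polynomial ℚ) :
    ∃ (n : ℤ) (A : Polynomial ℤ), n ≠ 0 ∧ A.map (Int.castRingHom ℚ) = Polynomial.C (n:ℚ) * r := by
  induction r using Polynomial.induction_on with
  | C a =>
      refine ⟨(a.den : ℤ), Polynomial.C a.num, by exact_mod_cast a.den_ne_zero, ?_⟩
      rw [Polynomial.map_C]
      rw [← Polynomial.C_mul]
      simp only [eq_intCast, Int.cast_natCast]
      rw [mul_comm, Rat.mul_den_eq_num]
  | add p q hp hq =>
      obtain ⟨n1, A1, hn1, h1⟩ := hp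
      obtain ⟨n2, A2, hn2, h2⟩ := hq
      refine ⟨n1 * n2, Polynomial.C n2 * A1 + Polynomial.C n1 * A2, mul_ne_zero hn1 hn2, ?_⟩
      simp only [Polynomial.map_add, Polynomial.map_mul, Polynomial.map_C, h1, h2]
      simp only [eq_intCast, Polynomial.C_mul, Int.cast_mul]
      ring
  | monomial n a ih =>
      obtain ⟨n1, A1, hn1, h1⟩ := ih
      refine ⟨n1, A1 * Polynomial.X, hn1, ?_⟩
      simp only [Polynomial.map_mul, Polynomial.map_X, h1]
      ring

private lemma cross_zero_pm {x z x' z' : ℤ} (h : Int.gcd x z = 1) (h' : Int.gcd x' z' = 1)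
    (hc : x * z' = x' * z) : (x' = x ∧ z' = z) ∨ (x' = -x ∧ z' = -z) := by
  have hxz : IsCoprime x z := Int.isCoprime_iff_gcd_eq_one.mpr h
  have hxz' : IsCoprime x' z' := Int.isCoprime_iff_gcd_eq_one.mpr h'
  have hz1 : z ∣ z' := hxz.symm.dvd_of_dvd_mul_left (by rw [hc]; exact dvd_mul_left z x')
  have hz2 : z' ∣ z := hxz'.symm.dvd_of_dvd_mul_left (by rw [← hc]; exact dvd_mul_left z' x)
  rcases Int.associated_iff.mp (associated_of_dvd_dvd hz1 hz2) with hzz | hzz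
  · rcases eq_or_ne z 0 with hz0 | hz0
    · -- z = 0, z' = 0
      have hz'0 : z' = 0 := by omega
      have hx1 : x.natAbs = 1 := by simpa [hz0, Int.gcd] using h
      have hx'1 : x'.natAbs = 1 := by simpa [hz'0, Int.gcd] using h'
      rcases Int.natAbs_eq_iff.mp hx1 with h1 | h1 <;>
        rcases Int.natAbs_eq_iff.mp hx'1 with h2 | h2 <;> simp_all <;> omega
    · left
      have : x * z = x' * z := by rw [← hzz] at hc; exact hc
      exact ⟨(mul_right_cancel₀ hz0 this).symm, hzz.symm⟩
  · rcases eq_or_ne z 0 with hz0 | hz0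
    · have hz'0 : z' = 0 := by omega
      have hx1 : x.natAbs = 1 := by simpa [hz0, Int.gcd] using h
      have hx'1 : x'.natAbs = 1 := by simpa [hz'0, Int.gcd] using h'
      rcases Int.natAbs_eq_iff.mp hx1 with h1 | h1 <;>
        rcases Int.natAbs_eq_iff.mp hx'1 with h2 | h2 <;> simp_all <;> omega
    · right
      have : x * z' = (-x') * z' := by rw [hzz] at hc; linarith [hc]
      rcases eq_or_ne z' 0 with hz'0 | hz'0
      · omega
      · have := mul_right_cancel₀ hz'0 this
        exact ⟨by omega, by omega⟩

private lemma small_coeff {p N k : ℕ} (hNp : N < p) {c : ℤ}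
    (hdvd : c = k * 1) : True := trivial

set_option maxHeartbeats 1000000 in
private lemma fiber_card_le {p N : ℕ} (hNp : N < p) (F : Finset (ℤ × ℤ))
    (hbox : ∀ v ∈ F, |v.1| ≤ (N:ℤ) ∧ |v.2| ≤ (N:ℤ) ∧ Int.gcd v.1 v.2 = 1)
    (hcross : ∀ v ∈ F, ∀ w ∈ F, ((p:ℤ))^2 ∣ (v.1 * w.2 - w.1 * v.2)) :
    F.card ≤ 9 := by
  have hp0 : 0 < p := lt_of_le_of_lt (Nat.zero_le N) hNp
  have hp2 : (0:ℤ) < (p:ℤ)^2 := by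
    have : (0:ℤ) < (p:ℤ) := by exact_mod_cast hp0
    positivity
  -- bound on cross products
  have hcb : ∀ v ∈ F, ∀ w ∈ F, |v.1 * w.2 - w.1 * v.2| < 2 * (p:ℤ)^2 := by
    intro v hv w hw
    obtain ⟨hv1, hv2, -⟩ := hbox v hv
    obtain ⟨hw1, hw2, -⟩ := hbox w hw
    have h1 : |v.1 * w.2| ≤ (N:ℤ) * N := by
      rw [abs_mul]; exact mul_le_mul hv1 hw2 (abs_nonneg _) (by positivity)
    have h2 : |w.1 * v.2| ≤ (N:ℤ) * N := by
      rw [abs_mul]; exact mul_le_mul hw1 hv2 (abs_nonneg _) (by positivity)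
    have hNp' : (N:ℤ) < (p:ℤ) := by exact_mod_cast hNp
    have hN0 : (0:ℤ) ≤ (N:ℤ) := by positivity
    have : (N:ℤ) * N < (p:ℤ)^2 := by nlinarith
    calc |v.1 * w.2 - w.1 * v.2| ≤ |v.1 * w.2| + |w.1 * v.2| := abs_sub _ _
      _ ≤ (N:ℤ)*N + (N:ℤ)*N := by linarith
      _ < 2 * (p:ℤ)^2 := by linarith
  -- the quotient of a cross product by p^2 has absolute value ≤ 1
  have hsmall : ∀ v ∈ F, ∀ w ∈ F, ∀ k : ℤ, v.1 * w.2 - w.1 * v.2 = k * (p:ℤ)^2 → |k| ≤ 1 := by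
    intro v hv w hw k hk
    by_contra hk2
    have hk3 : 2 ≤ |k| := by
      rcases le_or_gt (|k|) 1 with h | h
      · exact absurd h hk2
      · omega
    have hb := hcb v hv w hw
    rw [hk, abs_mul, abs_of_pos hp2] at hb
    nlinarith
  rcases F.eq_empty_or_nonempty with rfl | ⟨v1, hv1⟩
  · simp
  by_cases hex : ∃ v2 ∈ F, v1.1 * v2.2 - v2.1 * v1.2 ≠ 0
  · obtain ⟨v2, hv2, hne⟩ := hex
    obtain ⟨e, he⟩ := hcross v1 hv1 v2 hv2
    have he' : v1.1 * v2.2 - v2.1 * v1.2 = e * (p:ℤ)^2 := by rw [he]; ring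
    have heabs : |e| ≤ 1 := hsmall v1 hv1 v2 hv2 e he'
    have he0 : e ≠ 0 := by rintro rfl; rw [zero_mul] at he'; exact hne he'
    have hee : e = 1 ∨ e = -1 := by
      have := abs_le.mp heabs; omega
    classical
    have hsub : F ⊆ Finset.image
        (fun ab : ℤ × ℤ => (ab.1 * v1.1 + ab.2 * v2.1, ab.1 * v1.2 + ab.2 * v2.2))
        (({-1,0,1} : Finset ℤ) ×ˢ ({-1,0,1} : Finset ℤ)) := by
      intro v hv
      obtain ⟨s, hs⟩ := hcross v hv v2 hv2
      have hs' : v.1 * v2.2 - v2.1 * v.2 = s * (p:ℤ)^2 := by rw [hs]; ring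
      obtain ⟨r, hr⟩ := hcross v1 hv1 v hv
      have hr' : v1.1 * v.2 - v.1 * v1.2 = r * (p:ℤ)^2 := by rw [hr]; ring
      have hsabs : |s| ≤ 1 := hsmall v hv v2 hv2 s hs'
      have hrabs : |r| ≤ 1 := hsmall v1 hv1 v hv r hr'
      -- Cramer identities
      have id1 : (v1.1 * v2.2 - v2.1 * v1.2) * v.1
          = (v.1 * v2.2 - v2.1 * v.2) * v1.1 + (v1.1 * v.2 - v.1 * v1.2) * v2.1 := by ring
      have id2 : (v1.1 * v2.2 - v2.1 * v1.2) * v.2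
          = (v.1 * v2.2 - v2.1 * v.2) * v1.2 + (v1.1 * v.2 - v.1 * v1.2) * v2.2 := by ring
      rw [he', hs', hr'] at id1 id2
      have hv1eq : v.1 = (e * s) * v1.1 + (e * r) * v2.1 := by
        have h1 : (p:ℤ)^2 * (e * v.1) = (p:ℤ)^2 * ((s * v1.1) + (r * v2.1)) := by ring_nf; ring_nf at id1; linarith
        have h2 := mul_left_cancel₀ (ne_of_gt hp2) h1
        have he2 : e * e = 1 := by rcases hee with rfl | rfl <;> ring
        calc v.1 = (e*e) * v.1 := by rw [he2]; ring
          _ = e * (e * v.1) := by ring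
          _ = e * ((s * v1.1) + (r * v2.1)) := by rw [h2]
          _ = (e * s) * v1.1 + (e * r) * v2.1 := by ring
      have hv2eq : v.2 = (e * s) * v1.2 + (e * r) * v2.2 := by
        have h1 : (p:ℤ)^2 * (e * v.2) = (p:ℤ)^2 * ((s * v1.2) + (r * v2.2)) := by ring_nf; ring_nf at id2; linarith
        have h2 := mul_left_cancel₀ (ne_of_gt hp2) h1
        have he2 : e * e = 1 := by rcases hee with rfl | rfl <;> ring
        calc v.2 = (e*e) * v.2 := by rw [he2]; ring
          _ = e * (e * v.2) := by ring
          _ = e * ((s * v1.2) + (r * v2.2)) := by rw [h2]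
          _ = (e * s) * v1.2 + (e * r) * v2.2 := by ring
      refine Finset.mem_image.mpr ⟨(e*s, e*r), ?_, ?_⟩
      · have hs1 := abs_le.mp hsabs
        have hr1 := abs_le.mp hrabs
        have h1 : e*s = -1 ∨ e*s = 0 ∨ e*s = 1 := by
          rcases hee with rfl | rfl <;> omega
        have h2 : e*r = -1 ∨ e*r = 0 ∨ e*r = 1 := by
          rcases hee with rfl | rfl <;> omega
        simp only [Finset.mem_product, Finset.mem_insert, Finset.mem_singleton]
        tauto
      · exact Prod.ext hv1eq.symm hv2eq.symm
    calc F.card ≤ _ := Finset.card_le_card hsub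
      _ ≤ (({-1,0,1} : Finset ℤ) ×ˢ ({-1,0,1} : Finset ℤ)).card := Finset.card_image_le
      _ ≤ 9 := le_of_eq (by rfl)
  · push_neg at hex
    have hsub : F ⊆ {v1, (-v1.1, -v1.2)} := by
      intro v hv
      have h0 : v1.1 * v.2 - v.1 * v1.2 = 0 := hex v hv
      have h0' : v1.1 * v.2 = v.1 * v1.2 := by linarith
      obtain ⟨-, -, hg1⟩ := hbox v1 hv1
      obtain ⟨-, -, hgv⟩ := hbox v hv
      rcases cross_zero_pm hg1 hgv h0' with ⟨h1, h2⟩ | ⟨h1, h2⟩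
      · simp only [Finset.mem_insert, Finset.mem_singleton]
        left; exact Prod.ext h1 h2
      · simp only [Finset.mem_insert, Finset.mem_singleton]
        right; exact Prod.ext h1 h2
    calc F.card ≤ _ := Finset.card_le_card hsub
      _ ≤ 2 := le_trans (Finset.card_insert_le _ _)
          (by rw [Finset.card_singleton])
      _ ≤ 9 := by norm_num


private noncomputable def gZ (f : MvPolynomial (Fin 2) ℤ) : Polynomial ℤ :=
  MvPolynomial.eval₂ (Int.castRingHom (Polynomial ℤ)) ![Polynomial.X, 1] f

-- evaluation of (gZ f) mapped through φ at t equals eval₂ φ ![t,1] f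
private lemma gZ_eval {R : Type*} [CommRing R] (f : MvPolynomial (Fin 2) ℤ) (φ : ℤ →+* R)
    (t : R) : Polynomial.eval t ((gZ f).map φ) = MvPolynomial.eval₂ φ ![t, 1] f := by
  rw [Polynomial.eval_map, gZ]
  rw [show (Polynomial.eval₂ φ t (MvPolynomial.eval₂ (Int.castRingHom (Polynomial ℤ))
      ![Polynomial.X, 1] f)) = (Polynomial.eval₂RingHom φ t) (MvPolynomial.eval₂
      (Int.castRingHom (Polynomial ℤ)) ![Polynomial.X, 1] f) from rfl]
  rw [MvPolynomial.eval₂_comp_left]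
  congr 1
  · exact Subsingleton.elim _ _
  · funext i
    fin_cases i <;> simp

-- degree sum for homogeneous
private lemma mem_deg {f : MvPolynomial (Fin 2) ℤ} {d : ℕ} (hhom : f.IsHomogeneous d)
    {m : Fin 2 →₀ ℕ} (hm : m ∈ f.support) : m 0 + m 1 = d := by
  have hw := hhom (MvPolynomial.mem_support_iff.mp hm)
  rw [Finsupp.weight_apply, Finsupp.sum_fintype] at hw
  · simpa [Fin.sum_univ_two] using hw
  · intro i; simp

private lemma single_eq {d : ℕ} {m : Fin 2 →₀ ℕ} (h0 : m 0 = d) (h1 : m 1 = 0) :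
    m = Finsupp.single 0 d := by
  ext i
  fin_cases i
  · simpa using h0
  · simpa [Finsupp.single_eq_of_ne (by norm_num : (0 : Fin 2) ≠ 1)] using h1

-- scaling identity
private lemma hom_eval_smul {R : Type*} [CommRing R] {f : MvPolynomial (Fin 2) ℤ} {d : ℕ}
    (hhom : f.IsHomogeneous d) (φ : ℤ →+* R) (r : R) (v : Fin 2 → R) :
    MvPolynomial.eval₂ φ (fun i => r * v i) f = r ^ d * MvPolynomial.eval₂ φ v f := by
  rw [MvPolynomial.eval₂_eq', MvPolynomial.eval₂_eq', Finset.mul_sum]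
  apply Finset.sum_congr rfl
  intro m hm
  have hdeg := mem_deg hhom hm
  rw [Fin.prod_univ_two, Fin.prod_univ_two]
  rw [mul_pow, mul_pow, ← hdeg, pow_add]
  ring

-- coeff d of gZ
private lemma gZ_coeff_d {f : MvPolynomial (Fin 2) ℤ} {d : ℕ} (hhom : f.IsHomogeneous d) :
    (gZ f).coeff d = MvPolynomial.coeff (Finsupp.single 0 d) f := by
  rw [gZ, MvPolynomial.eval₂_eq']
  rw [Polynomial.finset_sum_coeff]
  rw [Finset.sum_eq_single (Finsupp.single 0 d)]
  · simp [Fin.prod_univ_two, Polynomial.coeff_C_mul, Polynomial.coeff_X_pow]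
  · intro m hm hne
    have hdeg := mem_deg hhom hm
    have h0 : m 0 ≠ d := by
      intro h0
      exact hne (single_eq h0 (by omega))
    have hC : (Int.castRingHom (Polynomial ℤ)) (MvPolynomial.coeff m f)
        = Polynomial.C (MvPolynomial.coeff m f) := by
      simp [eq_intCast, Polynomial.C_eq_intCast]
    rw [Fin.prod_univ_two, hC]
    simp only [Matrix.cons_val_zero, Matrix.cons_val_one, Matrix.head_cons, one_pow, mul_one,
      Polynomial.coeff_C_mul, Polynomial.coeff_X_pow]
    rw [if_neg (Ne.symm h0)]
    ring
  · intro h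
    have : MvPolynomial.coeff (Finsupp.single 0 d) f = 0 := by
      by_contra hc
      exact h (MvPolynomial.mem_support_iff.mpr hc)
    simp [this]

private lemma gZ_natDegree_le {f : MvPolynomial (Fin 2) ℤ} {d : ℕ} (hhom : f.IsHomogeneous d) :
    (gZ f).natDegree ≤ d := by
  rw [gZ, MvPolynomial.eval₂_eq']
  apply Polynomial.natDegree_sum_le_of_forall_le
  intro m hm
  have hdeg := mem_deg hhom hm
  calc ((Int.castRingHom (Polynomial ℤ)) (MvPolynomial.coeff m f)
        * ∏ i, (![Polynomial.X, (1:Polynomial ℤ)] i) ^ m i).natDegree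
      ≤ _ := Polynomial.natDegree_mul_le
    _ ≤ d := by
        rw [Fin.prod_univ_two]
        simp only [Matrix.cons_val_zero, Matrix.cons_val_one, Matrix.head_cons, one_pow, mul_one]
        have h1 : ((Int.castRingHom (Polynomial ℤ)) (MvPolynomial.coeff m f)).natDegree = 0 := by
          simp [eq_intCast]
        have h2 : ((Polynomial.X : Polynomial ℤ) ^ m 0).natDegree ≤ m 0 :=
          le_of_eq (Polynomial.natDegree_X_pow _)
        omega

-- evaluation at ![t, 0]
private lemma eval_x_zero {R : Type*} [CommRing R] {f : MvPolynomial (Fin 2) ℤ} {d : ℕ}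
    (hhom : f.IsHomogeneous d) (φ : ℤ →+* R) (t : R) :
    MvPolynomial.eval₂ φ ![t, 0] f = φ (MvPolynomial.coeff (Finsupp.single 0 d) f) * t ^ d := by
  rw [MvPolynomial.eval₂_eq']
  rw [Finset.sum_eq_single (Finsupp.single 0 d)]
  · have hd0 : (Finsupp.single (0 : Fin 2) d) 1 = 0 :=
      Finsupp.single_eq_of_ne (by norm_num)
    have hdd : (Finsupp.single (0 : Fin 2) d) 0 = d := Finsupp.single_eq_same
    rw [Fin.prod_univ_two]
    simp only [Matrix.cons_val_zero, Matrix.cons_val_one, Matrix.head_cons, hd0, hdd, pow_zero,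
      mul_one]
  · intro m hm hne
    have hdeg := mem_deg hhom hm
    rcases eq_or_ne (m 1) 0 with h1 | h1
    · exact absurd (single_eq (by omega) h1) hne
    · rw [Fin.prod_univ_two]
      simp [zero_pow h1]
  · intro h
    have : MvPolynomial.coeff (Finsupp.single 0 d) f = 0 := by
      by_contra hc
      exact h (MvPolynomial.mem_support_iff.mpr hc)
    simp [this]

private lemma gZ_map_rat (f : MvPolynomial (Fin 2) ℤ) :
    (gZ f).map (Int.castRingHom ℚ)
      = MvPolynomial.eval₂ (Int.castRingHom (Polynomial ℚ)) ![Polynomial.X, 1] f := by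
  rw [gZ]
  rw [show ((MvPolynomial.eval₂ (Int.castRingHom (Polynomial ℤ)) ![Polynomial.X, 1] f).map
      (Int.castRingHom ℚ)) = (Polynomial.mapRingHom (Int.castRingHom ℚ))
      (MvPolynomial.eval₂ (Int.castRingHom (Polynomial ℤ)) ![Polynomial.X, 1] f) from rfl]
  rw [MvPolynomial.eval₂_comp_left]
  congr 1
  · exact Subsingleton.elim _ _
  · funext i
    fin_cases i <;> simp

private lemma bezout {f : MvPolynomial (Fin 2) ℤ}
    (hsf : Squarefree ((MvPolynomial.eval₂ (Int.castRingHom (Polynomial ℚ))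
        ![Polynomial.X, 1] f))) :
    ∃ (m : ℤ) (A B : Polynomial ℤ), m ≠ 0 ∧
      A * gZ f + B * Polynomial.derivative (gZ f) = Polynomial.C m := by
  have hsq : Squarefree ((gZ f).map (Int.castRingHom ℚ)) := by rw [gZ_map_rat]; exact hsf
  have hsep : ((gZ f).map (Int.castRingHom ℚ)).Separable :=
    (PerfectField.separable_iff_squarefree).mpr hsq
  obtain ⟨u, v, huv⟩ := hsep
  obtain ⟨n1, A1, hn1, h1⟩ := exists_int_poly u
  obtain ⟨n2, A2, hn2, h2⟩ := exists_int_poly v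
  refine ⟨n1 * n2, Polynomial.C n2 * A1, Polynomial.C n1 * A2, mul_ne_zero hn1 hn2, ?_⟩
  apply Polynomial.map_injective (Int.castRingHom ℚ) Int.cast_injective
  simp only [Polynomial.map_add, Polynomial.map_mul, Polynomial.map_C, h1, h2,
    Polynomial.derivative_map, eq_intCast, Int.cast_mul, Polynomial.map_intCast]
  rw [← Polynomial.derivative_map]
  have hC1 : (Polynomial.C (n1:ℚ)) = (n1 : ℚ[X]) := by simp
  have hC2 : (Polynomial.C (n2:ℚ)) = (n2 : ℚ[X]) := by simp
  rw [hC1, hC2]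
  calc (n2 : ℚ[X]) * ((n1 : ℚ[X]) * u) * ((gZ f).map (Int.castRingHom ℚ))
        + (n1 : ℚ[X]) * ((n2 : ℚ[X]) * v) * Polynomial.derivative ((gZ f).map (Int.castRingHom ℚ))
      = (n1 : ℚ[X]) * (n2:ℚ[X]) * (u * ((gZ f).map (Int.castRingHom ℚ))
          + v * Polynomial.derivative ((gZ f).map (Int.castRingHom ℚ))) := by ring
    _ = (n1 : ℚ[X]) * (n2:ℚ[X]) := by rw [huv, mul_one]

private lemma isUnit_zmod {p : ℕ} (hp : p.Prime) {z : ℤ} (h : ¬ (p:ℤ) ∣ z) :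
    IsUnit ((z : ZMod (p^2))) := by
  have h' : ¬ p ∣ z.natAbs := fun hd => h (Int.natCast_dvd.mpr hd)
  have hcop : Nat.Coprime z.natAbs (p^2) :=
    Nat.Coprime.pow_right 2 (((Nat.Prime.coprime_iff_not_dvd hp).mpr h').symm)
  have hu : IsUnit ((z.natAbs : ZMod (p^2))) := (ZMod.isUnit_iff_coprime _ _).mpr hcop
  rcases Int.natAbs_eq z with hz | hz
  · rw [hz, Int.cast_natCast]; exact hu
  · rw [hz, Int.cast_neg, Int.cast_natCast]; exact IsUnit.neg hu


private lemma root_lift_unique {p : ℕ} (hp : p.Prime) {q A B : Polynomial ℤ} {m : ℤ}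
    (hm : ¬ (p:ℤ) ∣ m)
    (hbez : A * q + B * Polynomial.derivative q = Polynomial.C m)
    {t1 t2 : ZMod (p^2)}
    (h1 : (q.map (Int.castRingHom (ZMod (p^2)))).eval t1 = 0)
    (h2 : (q.map (Int.castRingHom (ZMod (p^2)))).eval t2 = 0)
    (hcast : ZMod.castHom (dvd_pow_self p two_ne_zero) (ZMod p) t1
      = ZMod.castHom (dvd_pow_self p two_ne_zero) (ZMod p) t2) : t1 = t2 := by
  haveI : NeZero (p^2) := ⟨pow_ne_zero 2 hp.ne_zero⟩
  set ψ := ZMod.castHom (dvd_pow_self p two_ne_zero) (ZMod p)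
  set h : ZMod (p^2) := t2 - t1 with hh
  clear_value h
  have hψh : ψ h = 0 := by rw [hh, map_sub, hcast, sub_self]
  -- h = p * u
  have hval : h = ((h.val : ℕ) : ZMod (p^2)) := (ZMod.natCast_rightInverse h).symm
  have hpv : p ∣ h.val := by
    have : ((h.val : ℕ) : ZMod p) = 0 := by
      rw [show ((h.val : ℕ) : ZMod p) = ψ ((h.val : ℕ) : ZMod (p^2)) by rw [map_natCast]]
      rw [← hval, hψh]
    exact (ZMod.natCast_eq_zero_iff _ _).mp this
  obtain ⟨u, hu⟩ := hpv
  have hsq : h * h = 0 := by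
    rw [hval, hu]
    push_cast
    have : ((p : ZMod (p^2)))^2 = 0 := by
      have := ZMod.natCast_self (p^2)
      push_cast at this
      exact this
    calc ((p : ZMod (p^2)) * u) * ((p : ZMod (p^2)) * u) = (p : ZMod (p^2))^2 * (u * u) := by ring
      _ = 0 := by rw [this, zero_mul]
  -- binomial expansion
  set q2 := q.map (Int.castRingHom (ZMod (p^2))) with hq2
  clear_value q2
  obtain ⟨k, hk⟩ := Polynomial.binomExpansion q2 t1 h
  rw [show t1 + h = t2 by rw [hh]; ring] at hk
  rw [h2, h1, zero_add] at hk
  have hkh : k * h^2 = 0 := by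
    have h20 : h^2 = 0 := by rw [pow_two h]; exact hsq
    rw [h20, mul_zero]
  have hder : (Polynomial.derivative q2).eval t1 * h = 0 := by
    rw [hkh, add_zero] at hk
    exact hk.symm
  -- Bezout gives derivative is a unit at roots
  have hbez2 : (A.map (Int.castRingHom (ZMod (p^2)))).eval t1 * q2.eval t1
      + (B.map (Int.castRingHom (ZMod (p^2)))).eval t1 * (Polynomial.derivative q2).eval t1 = (m : ZMod (p^2)) := by
    have := congrArg (fun r => (r.map (Int.castRingHom (ZMod (p^2)))).eval t1) hbez
    simpa [Polynomial.derivative_map, hq2] using this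
  rw [h1, mul_zero, zero_add] at hbez2
  have hmu : IsUnit ((m : ZMod (p^2))) := isUnit_zmod hp hm
  have : (m : ZMod (p^2)) * h = 0 := by
    rw [← hbez2, mul_assoc, hder, mul_zero]
  have h0 : h = 0 := (hmu.mul_right_eq_zero).mp this
  rw [hh] at h0
  exact (sub_eq_zero.mp h0).symm

/-- Let `f ∈ ℤ[x, z]` be a homogeneous polynomial of degree `d ≥ 1` with
nonzero discriminant (equivalently, `f(X, 1)` is squarefree over `ℚ` and the coefficient of
`x^d` is nonzero). There is a constant `C_f` such that for every integer `N > C_f` and every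
prime `p > N`, the number of pairs `(x, z) ∈ ℤ²` with `|x|, |z| ≤ N`, `gcd(x, z) = 1` and
`p² | f(x, z)` is at most `12 d`. -/
theorem stmt1 (f : MvPolynomial (Fin 2) ℤ) (d : ℕ) (hd : 1 ≤ d)
    (hhom : f.IsHomogeneous d)
    (hsf : Squarefree ((MvPolynomial.eval₂ (Int.castRingHom (Polynomial ℚ))
        ![Polynomial.X, 1] f)))
    (hlead : MvPolynomial.coeff (Finsupp.single 0 d) f ≠ 0) :
    ∃ C : ℝ, ∀ N : ℕ, C < (N : ℝ) → ∀ p : ℕ, p.Prime → N < p →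
      ({v : ℤ × ℤ | |v.1| ≤ (N : ℤ) ∧ |v.2| ≤ (N : ℤ) ∧ Int.gcd v.1 v.2 = 1 ∧
          (p : ℤ) ^ 2 ∣ MvPolynomial.eval ![v.1, v.2] f}.ncard : ℝ)
        ≤ 12 * d := by
  classical
  obtain ⟨m, A, B, hm0, hAB⟩ := bezout hsf
  set a := MvPolynomial.coeff (Finsupp.single 0 d) f with ha
  refine ⟨((m.natAbs + a.natAbs : ℕ) : ℝ), ?_⟩
  intro N hCN p hp hNp
  haveI : Fact p.Prime := ⟨hp⟩
  haveI : NeZero (p^2) := ⟨pow_ne_zero 2 hp.ne_zero⟩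
  have hbound : m.natAbs + a.natAbs < N := by exact_mod_cast hCN
  have hpm : ¬ (p:ℤ) ∣ m := by
    intro hdm
    have h1 : p ∣ m.natAbs := Int.natCast_dvd.mp hdm
    have := Nat.le_of_dvd (Int.natAbs_pos.mpr hm0) h1
    omega
  have hpa : ¬ (p:ℤ) ∣ a := by
    intro hda
    have h1 : p ∣ a.natAbs := Int.natCast_dvd.mp hda
    have := Nat.le_of_dvd (Int.natAbs_pos.mpr hlead) h1
    omega
  set S := {v : ℤ × ℤ | |v.1| ≤ (N : ℤ) ∧ |v.2| ≤ (N : ℤ) ∧ Int.gcd v.1 v.2 = 1 ∧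
      (p : ℤ) ^ 2 ∣ MvPolynomial.eval ![v.1, v.2] f} with hSdef
  have hfin : S.Finite := by
    apply Set.Finite.subset ((Set.finite_Icc (-(N:ℤ)) N).prod (Set.finite_Icc (-(N:ℤ)) N))
    rintro ⟨x, z⟩ ⟨hx, hz, -, -⟩
    exact ⟨Set.mem_Icc.mpr (abs_le.mp hx), Set.mem_Icc.mpr (abs_le.mp hz)⟩
  -- reduction of evaluation mod n
  have hev : ∀ (n : ℕ) (x z : ℤ), ((n:ℤ) ∣ MvPolynomial.eval ![x, z] f) →
      MvPolynomial.eval₂ (Int.castRingHom (ZMod n)) ![(x : ZMod n), (z : ZMod n)] f = 0 := by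
    intro n x z hdvd
    have h1 : (Int.castRingHom (ZMod n)) (MvPolynomial.eval ![x, z] f) = 0 := by
      simp only [eq_intCast]
      exact (ZMod.intCast_zmod_eq_zero_iff_dvd _ _).mpr hdvd
    rw [← MvPolynomial.eval₂_id] at h1
    rw [MvPolynomial.eval₂_comp_left (Int.castRingHom (ZMod n)) (RingHom.id ℤ)] at h1
    rw [RingHom.comp_id] at h1
    convert h1 using 2
    funext i
    fin_cases i <;> simp
  -- p does not divide z for solutions
  have hpz : ∀ v ∈ S, ¬ (p:ℤ) ∣ v.2 := by
    rintro ⟨x, z⟩ ⟨hx, hz, hgcd, hdvd⟩ hdz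
    have hdx : ¬ (p:ℤ) ∣ x := by
      intro hdx
      have h1 : p ∣ x.natAbs := Int.natCast_dvd.mp hdx
      have h2 : p ∣ z.natAbs := Int.natCast_dvd.mp hdz
      have h3 : p ∣ Int.gcd x z := Nat.dvd_gcd h1 h2
      rw [hgcd] at h3
      exact hp.one_lt.ne' (Nat.dvd_one.mp h3)
    have hpf : (p:ℤ) ∣ MvPolynomial.eval ![x, z] f :=
      dvd_trans (dvd_pow_self (p:ℤ) two_ne_zero) hdvd
    have h0 := hev p x z hpf
    rw [show ((z : ZMod p)) = 0 from (ZMod.intCast_zmod_eq_zero_iff_dvd _ _).mpr hdz] at h0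
    rw [eval_x_zero hhom (Int.castRingHom (ZMod p)) (x : ZMod p)] at h0
    have hxa : (x : ZMod p) ≠ 0 := fun hh => hdx ((ZMod.intCast_zmod_eq_zero_iff_dvd _ _).mp hh)
    have haa : ((Int.castRingHom (ZMod p)) a) ≠ 0 := by
      simp only [eq_intCast]
      exact fun hh => hpa ((ZMod.intCast_zmod_eq_zero_iff_dvd _ _).mp hh)
    rw [← ha] at h0
    exact absurd h0 (mul_ne_zero haa (pow_ne_zero d hxa))
  -- quotient map
  set t : ℤ × ℤ → ZMod (p^2) := fun v => (v.1 : ZMod (p^2)) * (v.2 : ZMod (p^2))⁻¹ with ht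
  have hunit : ∀ v ∈ S, IsUnit ((v.2 : ZMod (p^2))) := fun v hv => isUnit_zmod hp (hpz v hv)
  have hrel : ∀ v ∈ S, (v.1 : ZMod (p^2)) = t v * (v.2 : ZMod (p^2)) := by
    intro v hv
    rw [ht]
    simp only
    rw [mul_assoc, ZMod.inv_mul_of_unit _ (hunit v hv), mul_one]
  have hroot : ∀ v ∈ S, ((gZ f).map (Int.castRingHom (ZMod (p^2)))).eval (t v) = 0 := by
    intro v hv
    obtain ⟨hx, hz, hgcd, hdvd⟩ := hv
    have hdvd2 : ((p^2 : ℕ) : ℤ) ∣ MvPolynomial.eval ![v.1, v.2] f := by push_cast; exact hdvd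
    have h0 := hev (p^2) v.1 v.2 hdvd2
    have hsmul := hom_eval_smul hhom (Int.castRingHom (ZMod (p^2))) ((v.2 : ZMod (p^2)))
      ![t v, 1]
    have hfun : (fun i => (v.2 : ZMod (p^2)) * ![t v, 1] i)
        = ![(v.1 : ZMod (p^2)), (v.2 : ZMod (p^2))] := by
      funext i
      fin_cases i
      · simp only [Matrix.cons_val_zero]
        rw [mul_comm]
        exact (hrel v ⟨hx, hz, hgcd, hdvd⟩).symm
      · simp
    rw [hfun, h0] at hsmul
    have h1 := ((hunit v ⟨hx, hz, hgcd, hdvd⟩).pow d).mul_right_eq_zero.mp hsmul.symm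
    rw [gZ_eval]
    exact h1
  -- the map to roots mod p
  set ψ := ZMod.castHom (dvd_pow_self p two_ne_zero) (ZMod p) with hψ
  set Ψ : ℤ × ℤ → ZMod p := fun v => ψ (t v) with hΨ
  set gp := (gZ f).map (Int.castRingHom (ZMod p)) with hgp
  have hgp_ne : gp ≠ 0 := by
    intro h0
    have hc : gp.coeff d = 0 := by rw [h0]; simp
    rw [hgp, Polynomial.coeff_map, gZ_coeff_d hhom, ← ha] at hc
    simp only [eq_intCast] at hc
    exact hpa ((ZMod.intCast_zmod_eq_zero_iff_dvd _ _).mp hc)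
  have hgp_deg : gp.natDegree ≤ d :=
    le_trans (Polynomial.natDegree_map_le) (gZ_natDegree_le hhom)
  set Troots := gp.roots.toFinset with hTr
  have hTcard : Troots.card ≤ d :=
    le_trans (Multiset.toFinset_card_le _) (le_trans (Polynomial.card_roots' gp) hgp_deg)
  -- Ψ maps solutions into Troots
  have hmaps : ∀ v ∈ hfin.toFinset, Ψ v ∈ Troots := by
    intro v hv
    rw [Set.Finite.mem_toFinset] at hv
    have hr := hroot v hv
    have h1 : gp.eval (Ψ v) = 0 := by
      have h2 : gp = ((gZ f).map (Int.castRingHom (ZMod (p^2)))).map ψ := by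
        rw [hgp, Polynomial.map_map]
        congr 1
        exact Subsingleton.elim _ _
      rw [h2]
      show Polynomial.eval (ψ (t v)) _ = 0
      rw [Polynomial.eval_map, Polynomial.eval₂_hom, hr, map_zero]
    rw [hTr, Multiset.mem_toFinset, Polynomial.mem_roots hgp_ne]
    exact h1
  -- counting
  have hcount : hfin.toFinset.card = ∑ tt ∈ Troots, (hfin.toFinset.filter (fun v => Ψ v = tt)).card :=
    Finset.card_eq_sum_card_fiberwise hmaps
  have hfiber : ∀ tt ∈ Troots, (hfin.toFinset.filter (fun v => Ψ v = tt)).card ≤ 9 := by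
    intro tt htt
    apply fiber_card_le hNp
    · intro v hv
      rw [Finset.mem_filter, Set.Finite.mem_toFinset] at hv
      obtain ⟨⟨h1, h2, h3, h4⟩, h5⟩ := hv
      exact ⟨h1, h2, h3⟩
    · intro v hv w hw
      rw [Finset.mem_filter, Set.Finite.mem_toFinset] at hv hw
      obtain ⟨hvS, hvt⟩ := hv
      obtain ⟨hwS, hwt⟩ := hw
      have heq : t v = t w := by
        apply root_lift_unique hp hpm hAB (hroot v hvS) (hroot w hwS)
        rw [← hψ]
        show ψ (t v) = ψ (t w)
        rw [show ψ (t v) = Ψ v from rfl, show ψ (t w) = Ψ w from rfl, hvt, hwt]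
      have hz : ((v.1 * w.2 - w.1 * v.2 : ℤ) : ZMod (p^2)) = 0 := by
        push_cast
        rw [hrel v hvS, hrel w hwS, heq]
        ring
      have h3 := (ZMod.intCast_zmod_eq_zero_iff_dvd _ _).mp hz
      have h4 : ((p^2:ℕ):ℤ) = (p:ℤ)^2 := by push_cast; ring
      rw [h4] at h3
      exact h3
  have hcard : hfin.toFinset.card ≤ 9 * d := by
    calc hfin.toFinset.card = _ := hcount
      _ ≤ ∑ tt ∈ Troots, 9 := Finset.sum_le_sum hfiber
      _ = Troots.card * 9 := by rw [Finset.sum_const, smul_eq_mul]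
      _ ≤ d * 9 := by exact Nat.mul_le_mul_right 9 hTcard
      _ = 9 * d := by ring
  rw [Set.ncard_eq_toFinset_card _ hfin]
  have h12 : hfin.toFinset.card ≤ 12 * d := le_trans hcard (by omega)
  calc (hfin.toFinset.card : ℝ) ≤ ((12 * d : ℕ) : ℝ) := by exact_mod_cast h12
    _ = 12 * d := by push_cast; ring
end

section
/- Let L ⊆ ℤ² be a subgroup of finite index that contains at least one point (x,y) with gcd(x,y) = 1. Then the number of points (x,y) ∈ L with |x|, |y| ≤ N and gcd(x,y) = 1 is O(N²/[ℤ² : L] + 1), with an absolute implied constant. -/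
/-!
Let `v ∈ L` be primitive. The determinant `w ↦ v.1 * w.2 - v.2 * w.1` maps `ℤ²` onto `ℤ` with
kernel `ℤ v ⊆ L`, so `L` is the preimage of `[ℤ² : L] ℤ` and every `w ∈ L` has determinant
divisible by the index. A primitive `w ≠ ±v` in the box `[-N, N]²` has nonzero determinant of
size at most `2 ‖v‖ N`, leaving about `4 ‖v‖ N / [ℤ² : L]` possible values; the points with a
given value lie on one line parallel to `v`, which meets the box in at most `4 N / ‖v‖ + 1`
points; here `‖v‖ = max |v.1| |v.2| ≤ N`, so the product is `O(N² / [ℤ² : L])`.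
-/

open Finset

def wedge (v : ℤ × ℤ) : ℤ × ℤ →+ ℤ where
  toFun w := v.1 * w.2 - v.2 * w.1
  map_zero' := by simp
  map_add' w w' := by simp only [Prod.fst_add, Prod.snd_add]; ring

@[simp] lemma wedge_apply (v w : ℤ × ℤ) : wedge v w = v.1 * w.2 - v.2 * w.1 := rfl

section Primitive

variable {v w : ℤ × ℤ}

lemma wedge_surjective (hv : Int.gcd v.1 v.2 = 1) : Function.Surjective (wedge v) := by
  obtain ⟨a, b, hab⟩ := Int.isCoprime_iff_gcd_eq_one.mpr hv
  intro n
  refine ⟨n • (-b, a), ?_⟩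
  simp only [map_zsmul, wedge_apply, smul_eq_mul]
  linear_combination n * hab

lemma exists_eq_zsmul_of_wedge_eq_zero (hv : Int.gcd v.1 v.2 = 1) (h : wedge v w = 0) :
    ∃ t : ℤ, w = t • v := by
  obtain ⟨a, b, hab⟩ := Int.isCoprime_iff_gcd_eq_one.mpr hv
  rw [wedge_apply] at h
  refine ⟨a * w.1 + b * w.2, Prod.ext ?_ ?_⟩ <;>
    simp only [Prod.smul_fst, Prod.smul_snd, smul_eq_mul]
  · linear_combination (-w.1) * hab - b * h
  · linear_combination (-w.2) * hab + a * h

lemma eq_or_eq_neg_of_wedge_eq_zero (hv : Int.gcd v.1 v.2 = 1) (hw : Int.gcd w.1 w.2 = 1)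
    (h : wedge v w = 0) : w = v ∨ w = -v := by
  obtain ⟨t, rfl⟩ := exists_eq_zsmul_of_wedge_eq_zero hv h
  have ht : t.natAbs = 1 := by simpa [Int.gcd_mul_left, hv] using hw
  rcases Int.natAbs_eq_iff.mp ht with rfl | rfl <;> simp

lemma index_dvd_wedge {L : AddSubgroup (ℤ × ℤ)} (hv : Int.gcd v.1 v.2 = 1) (hvL : v ∈ L)
    (hwL : w ∈ L) : (L.index : ℤ) ∣ wedge v w := by
  have hker : (wedge v).ker ≤ L := fun u hu => by
    obtain ⟨t, rfl⟩ := exists_eq_zsmul_of_wedge_eq_zero hv hu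
    exact zsmul_mem hvL t
  obtain ⟨a, ha⟩ := Int.subgroup_cyclic (L.map (wedge v))
  rw [← AddSubgroup.zmultiples_eq_closure] at ha
  have hL : L = (AddSubgroup.zmultiples a).comap (wedge v) := by
    rw [← ha, AddSubgroup.comap_map_eq_self hker]
  rw [hL, AddSubgroup.index_comap_of_surjective _ (wedge_surjective hv), Int.index_zmultiples,
    Int.natCast_natAbs, abs_dvd]
  rw [hL] at hwL
  exact Int.mem_zmultiples_iff.mp hwL

end Primitive

section Counting

variable {v : ℤ × ℤ} {N : ℕ}

lemma natAbs_wedge_le {w : ℤ × ℤ} (hw : w.1.natAbs ≤ N ∧ w.2.natAbs ≤ N) :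
    (wedge v w).natAbs ≤ 2 * max v.1.natAbs v.2.natAbs * N := by
  have h1 : v.1.natAbs * w.2.natAbs ≤ max v.1.natAbs v.2.natAbs * N :=
    Nat.mul_le_mul (le_max_left _ _) hw.2
  have h2 : v.2.natAbs * w.1.natAbs ≤ max v.1.natAbs v.2.natAbs * N :=
    Nat.mul_le_mul (le_max_right _ _) hw.1
  calc (wedge v w).natAbs ≤ (v.1 * w.2).natAbs + (v.2 * w.1).natAbs := Int.natAbs_sub_le _ _
    _ ≤ 2 * max v.1.natAbs v.2.natAbs * N := by
      rw [Int.natAbs_mul, Int.natAbs_mul, mul_assoc]; omega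

lemma card_le_of_wedge_eq (hv : Int.gcd v.1 v.2 = 1) {c : ℤ} {A : Finset (ℤ × ℤ)}
    (hbox : ∀ w ∈ A, w.1.natAbs ≤ N ∧ w.2.natAbs ≤ N) (hA : ∀ w ∈ A, wedge v w = c) :
    #A ≤ 2 * (2 * N / max v.1.natAbs v.2.natAbs) + 1 := by
  rcases A.eq_empty_or_nonempty with rfl | ⟨w₀, hw₀⟩
  · simp
  set M := max v.1.natAbs v.2.natAbs
  set D := 2 * N / M
  have hM : 0 < M := by
    by_contra! h
    have : v.1 = 0 ∧ v.2 = 0 := by omega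
    simp [this] at hv
  have hsub : A ⊆ (Icc (-(D : ℤ)) D).image (fun t => w₀ + t • v) := by
    intro w hw
    obtain ⟨t, ht⟩ := exists_eq_zsmul_of_wedge_eq_zero hv
      (show wedge v (w - w₀) = 0 by rw [map_sub, hA w hw, hA w₀ hw₀, sub_self])
    have h1 : t.natAbs * v.1.natAbs ≤ 2 * N := by
      have := congrArg (fun u => u.1.natAbs) ht
      simp only [Prod.fst_sub, Prod.smul_fst, smul_eq_mul, Int.natAbs_mul] at this
      have := hbox w hw; have := hbox w₀ hw₀; omega
    have h2 : t.natAbs * v.2.natAbs ≤ 2 * N := by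
      have := congrArg (fun u => u.2.natAbs) ht
      simp only [Prod.snd_sub, Prod.smul_snd, smul_eq_mul, Int.natAbs_mul] at this
      have := hbox w hw; have := hbox w₀ hw₀; omega
    have htD : t.natAbs ≤ D :=
      (Nat.le_div_iff_mul_le hM).2 (by rw [← Nat.mul_max_mul_left]; exact max_le h1 h2)
    exact mem_image.2 ⟨t, mem_Icc.2 (by omega), (sub_eq_iff_eq_add'.1 ht).symm⟩
  calc #A ≤ #((Icc (-(D : ℤ)) D).image (fun t => w₀ + t • v)) := card_le_card hsub
    _ ≤ #(Icc (-(D : ℤ)) D) := card_image_le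
    _ = 2 * D + 1 := by rw [Int.card_Icc]; omega

lemma mul_card_le_of_dvd_wedge (hv : Int.gcd v.1 v.2 = 1) {m : ℕ} {s : Finset (ℤ × ℤ)}
    (hvs : v ∈ s) (hbox : ∀ w ∈ s, w.1.natAbs ≤ N ∧ w.2.natAbs ≤ N)
    (hprim : ∀ w ∈ s, Int.gcd w.1 w.2 = 1) (hdvd : ∀ w ∈ s, (m : ℤ) ∣ wedge v w) :
    m * #s ≤ 20 * N ^ 2 + 2 * m := by
  set M := max v.1.natAbs v.2.natAbs
  set D := 2 * N / M
  set K := 2 * M * N / m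
  have hMN : M ≤ N := max_le (hbox v hvs).1 (hbox v hvs).2
  have hzero : #{w ∈ s | wedge v w = 0} ≤ 2 := by
    refine (card_le_card fun w hw => ?_).trans (card_le_two (a := v) (b := -v))
    rw [mem_filter] at hw
    rcases eq_or_eq_neg_of_wedge_eq_zero hv (hprim w hw.1) hw.2 with rfl | rfl <;> simp
  have hmaps : ∀ w ∈ {w ∈ s | wedge v w ≠ 0},
      wedge v w ∈ ((Icc (-(K : ℤ)) K).erase 0).image ((m : ℤ) * ·) := by
    intro w hw
    rw [mem_filter] at hw
    obtain ⟨k, hk⟩ := hdvd w hw.1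
    have hk0 : k ≠ 0 := by rintro rfl; exact hw.2 (by simp [hk])
    have hm : 0 < m := Nat.pos_of_ne_zero (by rintro rfl; exact hw.2 (by simp [hk]))
    have hkK : k.natAbs ≤ K := (Nat.le_div_iff_mul_le hm).2 (by
      have := natAbs_wedge_le (v := v) (hbox w hw.1)
      rwa [hk, Int.natAbs_mul, Int.natAbs_natCast, mul_comm] at this)
    exact mem_image.2 ⟨k, mem_erase.2 ⟨hk0, mem_Icc.2 (by omega)⟩, hk.symm⟩
  have hnonzero : #{w ∈ s | wedge v w ≠ 0} ≤ (2 * D + 1) * (2 * K) := by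
    refine (card_le_mul_card_image_of_maps_to hmaps (2 * D + 1) fun c _ => ?_).trans ?_
    · exact card_le_of_wedge_eq hv
        (fun w hw => hbox w (mem_of_mem_filter w (mem_of_mem_filter w hw)))
        fun w hw => (mem_filter.1 hw).2
    · gcongr
      refine card_image_le.trans ?_
      rw [card_erase_of_mem (by simp), Int.card_Icc]
      omega
  have hDM : D * M ≤ 2 * N := Nat.div_mul_le_self _ _
  have hKm : K * m ≤ 2 * M * N := Nat.div_mul_le_self _ _
  have hcard := card_filter_add_card_filter_not (s := s) (fun w => wedge v w = 0)
  nlinarith [Nat.mul_le_mul_left (4 * D) hKm, Nat.mul_le_mul_left (8 * N) hDM,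
    Nat.mul_le_mul_right N hMN]

end Counting

/-- There is an absolute constant `C` such that for every finite-index
subgroup `L ⊆ ℤ²` containing at least one point with coprime coordinates, and every `N`,
the number of points `(x, y) ∈ L` with `|x|, |y| ≤ N` and `gcd(x, y) = 1` is at most
`C * (N² / [ℤ² : L] + 1)`. -/
theorem stmt2 :
    ∃ C : ℝ, 0 < C ∧
      ∀ (L : AddSubgroup (ℤ × ℤ)), L.FiniteIndex →
        (∃ v ∈ L, Int.gcd v.1 v.2 = 1) →
        ∀ N : ℕ,
          ({v : ℤ × ℤ | v ∈ L ∧ |v.1| ≤ (N : ℤ) ∧ |v.2| ≤ (N : ℤ) ∧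
              Int.gcd v.1 v.2 = 1}.ncard : ℝ)
            ≤ C * ((N : ℝ) ^ 2 / (L.index : ℝ) + 1) := by
  refine ⟨20, by norm_num, fun L hL _ N => ?_⟩
  set S := {v : ℤ × ℤ | v ∈ L ∧ |v.1| ≤ (N : ℤ) ∧ |v.2| ≤ (N : ℤ) ∧ Int.gcd v.1 v.2 = 1}
  have hfin : S.Finite := ((Set.finite_Icc (-(N : ℤ)) N).prod (Set.finite_Icc _ _)).subset
    fun w hw => ⟨abs_le.1 hw.2.1, abs_le.1 hw.2.2.1⟩
  rcases S.eq_empty_or_nonempty with hS | ⟨v, hv⟩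
  · rw [hS, Set.ncard_empty, Nat.cast_zero]
    positivity
  have hbox : ∀ w ∈ hfin.toFinset, w.1.natAbs ≤ N ∧ w.2.natAbs ≤ N := fun w hw => by
    obtain ⟨-, h1, h2, -⟩ := hfin.mem_toFinset.1 hw
    rw [Int.abs_eq_natAbs] at h1 h2
    exact ⟨by exact_mod_cast h1, by exact_mod_cast h2⟩
  have hcount := mul_card_le_of_dvd_wedge hv.2.2.2 (hfin.mem_toFinset.2 hv) hbox
    (fun w hw => (hfin.mem_toFinset.1 hw).2.2.2)
    (fun w hw => index_dvd_wedge hv.2.2.2 hv.1 (hfin.mem_toFinset.1 hw).1)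
  have hm : (0 : ℝ) < L.index := by exact_mod_cast Nat.pos_of_ne_zero hL.index_ne_zero
  rw [Set.ncard_eq_toFinset_card S hfin, div_add_one hm.ne', mul_div_assoc', le_div_iff₀ hm]
  have : (L.index : ℝ) * #hfin.toFinset ≤ 20 * N ^ 2 + 2 * L.index := by exact_mod_cast hcount
  linarith
end

section
/- Let K be a p-adic field with ring of integers O_K and maximal ideal 𝔭, and let P ∈ O_K[x] be a polynomial that is squarefree as an element of K[x] and not divisible by a uniformizer. Then for every n ≥ 1 the congruence P(x) ≡ 0 (mod 𝔭ⁿ) has at most max(|Disc P|_𝔭^{-1}·deg P, |Disc P|_𝔭^{-3}) roots in O_K/𝔭ⁿ. -/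
/-!
Expanding the adjugate of the Sylvester matrix of `P` and `P'` against the vector of powers of `y`
writes `Disc P` as an `O`-combination of `P(y)` and `P'(y)` once `deg P ≥ 2`; for `deg P ≤ 1`
primitivity does the same job. So `P(y)` and `P'(y)` never both lie in `𝔭^(v+1)`.
By Taylor expansion, `P(y') - P(y) = (P'(y) + k (y' - y)) (y' - y)`, where the first factor has
valuation at most `v` whenever `y' ≡ y mod 𝔭^(v+1)`; so roots mod `𝔭ⁿ` that agree mod `𝔭^(v+1)`
agree mod `𝔭^(n-v)`. Hence each root mod `𝔭^(v+1)` has at most `q^v` lifts among the roots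
mod `𝔭ⁿ`: at most `deg P` roots when `v = 0` (roots in the residue field), and at most
`q^(v+1) · q^v ≤ q^(3v)` otherwise.
-/

open Polynomial

/-- The Sylvester matrix of two polynomials `f`, `g`. -/
def sylvesterMatrix {R : Type*} [CommRing R] (f g : Polynomial R) :
    Matrix (Fin (g.natDegree + f.natDegree)) (Fin (g.natDegree + f.natDegree)) R :=
  Matrix.of fun i j =>
    if (i : ℕ) < g.natDegree then
      (if (i : ℕ) ≤ (j : ℕ) ∧ (j : ℕ) ≤ (i : ℕ) + f.natDegree
        then f.coeff (f.natDegree + i - j) else 0)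
    else
      (if (i : ℕ) - g.natDegree ≤ (j : ℕ) ∧ (j : ℕ) ≤ ((i : ℕ) - g.natDegree) + g.natDegree
        then g.coeff (g.natDegree + ((i : ℕ) - g.natDegree) - j) else 0)

/-- The resultant of two polynomials, as the determinant of their Sylvester matrix. -/
def polyResultant {R : Type*} [CommRing R] (f g : Polynomial R) : R :=
  (sylvesterMatrix f g).det

/-- The discriminant of a polynomial over a field:
`disc f = (-1)^{m(m-1)/2} · Res(f, f') / lc(f)` where `m = deg f`. -/
noncomputable def polyDisc {K : Type*} [Field K] (f : Polynomial K) : K :=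
  ((-1) ^ (f.natDegree * (f.natDegree - 1) / 2) * polyResultant f f.derivative)
    / f.leadingCoeff

open Matrix

theorem Matrix.det_mem_of_vecMul_mem {n R : Type*} [Fintype n] [DecidableEq n] [CommRing R]
    (A : Matrix n n R) {I : Ideal R} {u : n → R} {k : n} (hk : u k = 1)
    (h : ∀ j, (u ᵥ* A) j ∈ I) : A.det ∈ I := by
  have hdet : A.det = ((u ᵥ* A) ᵥ* A.adjugate) k := by
    rw [vecMul_vecMul, mul_adjugate, vecMul_smul, vecMul_one, Pi.smul_apply, hk, smul_eq_mul,
      mul_one]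
  rw [hdet]
  exact Ideal.sum_mem _ fun j _ => Ideal.mul_mem_right _ _ (h j)

theorem Matrix.vecMul_updateRow_smul_self {m n R : Type*} [Fintype m] [DecidableEq m] [CommRing R]
    (A : Matrix m n R) (v : m → R) (k : m) (c : R) :
    v ᵥ* A.updateRow k (c • A k) = Function.update v k (v k * c) ᵥ* A := by
  ext j
  simp only [vecMul, dotProduct, updateRow_apply, Function.update_apply]
  refine Finset.sum_congr rfl fun i _ => ?_
  split_ifs with hi
  · subst hi; simp [mul_assoc]
  · rfl

namespace Polynomial

variable {R : Type*} [CommRing R]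

theorem sum_pow_mul_ite_coeff_sub_eq {h : R[X]} {N n : ℕ} (hh : h.natDegree ≤ n) {j : ℕ}
    (hj : j + n < N) (x : R) :
    ∑ i : Fin N, x ^ (i : ℕ) * (if (i : ℕ) ∈ Set.Icc j (j + n) then h.coeff (i - j) else 0) =
      x ^ j * h.eval x := by
  have hdeg : (X ^ j * h).natDegree < N :=
    (natDegree_mul_le.trans (add_le_add (natDegree_X_pow_le j) hh)).trans_lt hj
  rw [← eval_X_pow (R := R) (n := j) (x := x), ← eval_mul, eval_eq_sum_range' hdeg,
    ← Fin.sum_univ_eq_sum_range]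
  refine Finset.sum_congr rfl fun i _ => ?_
  rw [coeff_X_pow_mul', mul_comm]
  congr 1
  by_cases hji : j ≤ (i : ℕ)
  · by_cases hin : (i : ℕ) ≤ j + n
    · simp [hji, hin]
    · rw [if_neg (by simp [hin]), if_pos hji, coeff_eq_zero_of_natDegree_lt (by omega)]
  · rw [if_neg (by simp [hji]), if_neg hji]

theorem powers_vecMul_sylvester_mem_span {f g : R[X]} {m n : ℕ} (hf : f.natDegree ≤ m)
    (hg : g.natDegree ≤ n) (x : R) (j : Fin (m + n)) :
    ((fun i : Fin (m + n) => x ^ (i : ℕ)) ᵥ* sylvester f g m n) j ∈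
      Ideal.span {f.eval x, g.eval x} := by
  induction j using Fin.addCases with
  | left j =>
    simp only [vecMul, dotProduct, sylvester, of_apply, Fin.addCases_left]
    rw [sum_pow_mul_ite_coeff_sub_eq hg (by omega)]
    exact Ideal.mul_mem_left _ _ (Ideal.subset_span (by simp))
  | right j =>
    simp only [vecMul, dotProduct, sylvester, of_apply, Fin.addCases_right]
    rw [sum_pow_mul_ite_coeff_sub_eq hf (by omega)]
    exact Ideal.mul_mem_left _ _ (Ideal.subset_span (by simp))

theorem discr_mem_span_eval {f : R[X]} (hf : 2 ≤ f.natDegree) (x : R) :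
    f.discr ∈ Ideal.span {f.eval x, f.derivative.eval x} := by
  let last : Fin (f.natDegree - 1 + f.natDegree) := ⟨2 * f.natDegree - 2, by omega⟩
  let v : Fin (f.natDegree - 1 + f.natDegree) → R := fun i => x ^ (i : ℕ)
  have hdet : f.sylvesterDeriv.det ∈ Ideal.span {f.eval x, f.derivative.eval x} := by
    -- `sylvesterDeriv` is the Sylvester matrix of `f'` and `f` with its last row divided by the
    -- leading coefficient, so the last power of `x` is multiplied by it to compensate.
    refine det_mem_of_vecMul_mem _ (u := Function.update v last (v last * f.leadingCoeff))
      (k := ⟨0, by omega⟩) ?_ fun j => ?_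
    · rw [Function.update_of_ne (by simp only [ne_eq, Fin.ext_iff, last]; omega)]
      simp [v]
    · rw [← vecMul_updateRow_smul_self, sylvesterDeriv_updateRow f (by omega), Set.pair_comm]
      exact powers_vecMul_sylvester_mem_span (natDegree_derivative_le f) le_rfl x j
  exact Ideal.mul_mem_right _ _ hdet

theorem discr_map_of_injective {S : Type*} [CommRing S] [IsDomain S] {φ : R →+* S}
    (hφ : Function.Injective φ) {f : R[X]} (hf : 0 < f.natDegree) :
    (f.map φ).discr = φ f.discr := by
  have hdeg := natDegree_map_eq_of_injective hφ f
  have hlc : φ f.leadingCoeff ≠ 0 :=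
    (map_ne_zero_iff φ hφ).mpr (leadingCoeff_ne_zero.mpr (ne_zero_of_natDegree_gt hf))
  have hres := resultant_deriv (f := f.map φ) (natDegree_pos_iff_degree_pos.mp (hdeg ▸ hf))
  rw [derivative_map, hdeg, resultant_map_map, resultant_deriv (natDegree_pos_iff_degree_pos.mp hf),
    leadingCoeff_map_of_injective hφ] at hres
  simp only [map_mul, map_pow, map_neg, map_one] at hres
  exact (mul_left_cancel₀ (mul_ne_zero (pow_ne_zero _ (neg_ne_zero.mpr one_ne_zero)) hlc)
    hres).symm

end Polynomial

theorem polyResultant_eq_resultant {R : Type*} [CommRing R] (f g : Polynomial R) :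
    polyResultant f g = f.resultant g := by
  let e : Fin (g.natDegree + f.natDegree) ≃ Fin (f.natDegree + g.natDegree) :=
    Fin.revPerm.trans (finCongr (add_comm _ _))
  have : sylvesterMatrix f g = (f.sylvester g f.natDegree g.natDegree)ᵀ.submatrix e e := by
    ext ⟨i, hi⟩ ⟨j, hj⟩
    simp only [sylvesterMatrix, Fin.val_fin_le, tsub_le_iff_right, of_apply, Fin.mk_le_mk,
      Polynomial.sylvester, Fin.addCases, Fin.val_castLT, Set.mem_Icc, Fin.val_subNat,
      Fin.val_cast, eq_rec_constant, dite_eq_ite, Equiv.coe_trans, submatrix_apply,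
      Function.comp_apply, Fin.revPerm_apply, finCongr_apply, transpose_apply, Fin.val_rev,
      Fin.cast_le_cast, Fin.rev_le_rev, e]
    split_ifs <;> first | rfl | omega | (congr 1; omega)
  rw [polyResultant, this, det_submatrix_equiv_self, det_transpose, Polynomial.resultant]

theorem polyDisc_eq_discr {K : Type*} [Field K] [CharZero K] {f : K[X]} (hf : 0 < f.natDegree) :
    polyDisc f = f.discr := by
  have hlc : f.leadingCoeff ≠ 0 := leadingCoeff_ne_zero.mpr (ne_zero_of_natDegree_gt hf)
  rw [polyDisc, polyResultant_eq_resultant, resultant, natDegree_derivative, ← resultant,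
    resultant_deriv (natDegree_pos_iff_degree_pos.mp hf), div_eq_iff hlc, ← mul_assoc, ← mul_assoc,
    ← pow_add, ← two_mul, pow_mul, neg_one_sq, one_pow, one_mul, mul_comm]

theorem ncard_setOf_aeval_eq_zero_le_natDegree {R A : Type*} [CommRing R] [CommRing A] [IsDomain A]
    [Algebra R A] {P : R[X]} (hP : P.map (algebraMap R A) ≠ 0) :
    {x : A | aeval x P = 0}.ncard ≤ P.natDegree := by
  classical
  calc {x : A | aeval x P = 0}.ncard ≤ ((P.aroots A).toFinset : Set A).ncard :=
        Set.ncard_le_ncard (fun x hx => by simpa [mem_aroots', hP] using hx)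
          (Finset.finite_toSet _)
    _ ≤ Multiset.card (P.aroots A) := by
        rw [Set.ncard_coe_finset]; exact Multiset.toFinset_card_le _
    _ ≤ P.natDegree := (card_roots' _).trans natDegree_map_le

theorem ncard_roots_quotient_le_natDegree {R : Type*} [CommRing R] {I : Ideal R} [I.IsPrime]
    {P : R[X]} (hP : ∃ i, P.coeff i ∉ I) : {x : R ⧸ I | aeval x P = 0}.ncard ≤ P.natDegree := by
  refine ncard_setOf_aeval_eq_zero_le_natDegree fun h => ?_
  obtain ⟨i, hi⟩ := hP
  exact hi (Ideal.Quotient.eq_zero_iff_mem.mp (by simpa using congr_arg (coeff · i) h))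

theorem ncard_le_ncard_image_mul_natCard_ker {G H K : Type*} [AddGroup G] [Finite G] [AddGroup K]
    (f : G → H) (g : G →+ K) {T : Set G}
    (hT : ∀ t ∈ T, ∀ t' ∈ T, f t = f t' → g t = g t') :
    T.ncard ≤ (f '' T).ncard * Nat.card g.ker := by
  let σ := Function.invFunOn f T
  have hσ : ∀ t ∈ T, σ (f t) ∈ T ∧ f (σ (f t)) = f t := fun t ht =>
    ⟨Function.invFunOn_mem ⟨t, ht, rfl⟩, Function.invFunOn_eq ⟨t, ht, rfl⟩⟩
  rw [show Nat.card g.ker = (g.ker : Set G).ncard from Nat.card_coe_set_eq _, ← Set.ncard_prod]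
  refine Set.ncard_le_ncard_of_injOn (fun t => (f t, t - σ (f t))) (fun t ht => ⟨⟨t, ht, rfl⟩, ?_⟩)
    (fun t _ t' _ htt' => ?_) ((Set.toFinite _).prod (Set.toFinite _))
  · have hg := hT _ (hσ t ht).1 t ht (hσ t ht).2
    simp [hg]
  · simp only [Prod.mk.injEq] at htt'
    rw [htt'.1] at htt'
    exact sub_left_inj.mp htt'.2

theorem natCard_ker_factor_mul_natCard {R : Type*} [CommRing R] {I J : Ideal R} (h : I ≤ J) :
    Nat.card (Ideal.Quotient.factor h).toAddMonoidHom.ker * Nat.card (R ⧸ J) =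
      Nat.card (R ⧸ I) := by
  let φ := (Ideal.Quotient.factor h).toAddMonoidHom
  rw [AddSubgroup.card_eq_card_quotient_mul_card_addSubgroup φ.ker, mul_comm,
    Nat.card_congr (QuotientAddGroup.quotientKerEquivOfSurjective φ
      (Ideal.Quotient.factor_surjective h)).toEquiv]

theorem aeval_quotient_mk_eq_zero_iff {R : Type*} [CommRing R] {I : Ideal R} {P : R[X]} {y : R} :
    aeval (Ideal.Quotient.mk I y) P = 0 ↔ P.eval y ∈ I := by
  rw [← Ideal.Quotient.algebraMap_eq, aeval_algebraMap_apply_eq_algebraMap_eval,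
    Ideal.Quotient.algebraMap_eq, Ideal.Quotient.eq_zero_iff_mem]

section LocalRing

variable {R : Type*} [CommRing R] [IsLocalRing R]

local notation "𝔪" => IsLocalRing.maximalIdeal R

theorem derivative_eval_notMem_of_natDegree_le_one {P : R[X]} (hdeg : P.natDegree ≤ 1)
    (hprim : ∃ i, P.coeff i ∉ 𝔪) {y : R} (hy : P.eval y ∈ 𝔪) : P.derivative.eval y ∉ 𝔪 := by
  rw [eq_X_add_C_of_natDegree_le_one hdeg] at hy ⊢
  simp only [eval_add, eval_mul, eval_C, eval_X, derivative_add, derivative_mul, derivative_C,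
    zero_mul, derivative_X, mul_one, zero_add, add_zero] at hy ⊢
  intro h1
  obtain ⟨i, hi⟩ := hprim
  match i with
  | 0 => exact hi (by simpa using Ideal.sub_mem _ hy (Ideal.mul_mem_right y _ h1))
  | 1 => exact hi h1
  | i + 2 => exact hi (by rw [coeff_eq_zero_of_natDegree_lt (by omega)]; exact zero_mem _)

end LocalRing

section DiscreteValuationRing

variable {O : Type*} [CommRing O] [IsDomain O] [IsDiscreteValuationRing O]

local notation "𝔪" => IsLocalRing.maximalIdeal O

theorem Irreducible.mem_maximalIdeal_pow_iff {π : O} (hπ : Irreducible π) {x : O} {k : ℕ} :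
    x ∈ 𝔪 ^ k ↔ π ^ k ∣ x := by
  rw [hπ.maximalIdeal_eq, Ideal.span_singleton_pow, Ideal.mem_span_singleton]

theorem mem_maximalIdeal_pow_sub_of_mul_mem {a b : O} {v n : ℕ} (ha : a ∉ 𝔪 ^ (v + 1))
    (hab : a * b ∈ 𝔪 ^ n) : b ∈ 𝔪 ^ (n - v) := by
  obtain ⟨π, hπ⟩ := IsDiscreteValuationRing.exists_irreducible O
  have ha0 : a ≠ 0 := by rintro rfl; exact ha (zero_mem _)
  obtain ⟨t, u, rfl⟩ := IsDiscreteValuationRing.eq_unit_mul_pow_irreducible ha0 hπ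
  rw [hπ.mem_maximalIdeal_pow_iff, mul_assoc, Units.dvd_mul_left] at hab
  rw [hπ.mem_maximalIdeal_pow_iff, Units.dvd_mul_left] at ha
  rw [hπ.mem_maximalIdeal_pow_iff]
  have ht : t ≤ v := by
    by_contra! ht
    exact ha (pow_dvd_pow π ht)
  rcases le_or_gt n v with hnv | hvn
  · simp [Nat.sub_eq_zero_of_le hnv]
  · rw [← mul_dvd_mul_iff_right (pow_ne_zero t hπ.ne_zero), ← pow_add, mul_comm b]
    exact (pow_dvd_pow π (by omega)).trans hab

theorem sub_mem_maximalIdeal_pow_of_eval_mem {P : O[X]} {y y' : O} {v n : ℕ}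
    (hP' : P.derivative.eval y ∉ 𝔪 ^ (v + 1)) (hy : P.eval y ∈ 𝔪 ^ n) (hy' : P.eval y' ∈ 𝔪 ^ n)
    (hyy' : y' - y ∈ 𝔪 ^ (v + 1)) : y' - y ∈ 𝔪 ^ (n - v) := by
  obtain ⟨k, hk⟩ := P.binomExpansion y (y' - y)
  rw [add_sub_cancel] at hk
  refine mem_maximalIdeal_pow_sub_of_mul_mem (a := P.derivative.eval y + k * (y' - y)) ?_ ?_
  · intro h
    exact hP' (by simpa using Ideal.sub_mem _ h (Ideal.mul_mem_left _ k hyy'))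
  · have : (P.derivative.eval y + k * (y' - y)) * (y' - y) = P.eval y' - P.eval y := by
      rw [hk]; ring
    rw [this]
    exact Ideal.sub_mem _ hy' hy

theorem derivative_eval_notMem_of_discr_eq {P : O[X]} (hdeg : 2 ≤ P.natDegree) {π w : O}
    (hπ : Irreducible π) (hw : IsUnit w) {v : ℕ} (hdisc : P.discr = π ^ v * w) {y : O}
    (hy : P.eval y ∈ 𝔪 ^ (v + 1)) : P.derivative.eval y ∉ 𝔪 ^ (v + 1) := by
  intro hy'
  have hmem := Ideal.span_le.mpr (Set.pair_subset hy hy') (discr_mem_span_eval hdeg y)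
  rw [hdisc, hπ.mem_maximalIdeal_pow_iff, pow_succ,
    mul_dvd_mul_iff_left (pow_ne_zero v hπ.ne_zero)] at hmem
  exact hπ.not_isUnit (isUnit_of_dvd_unit hmem hw)

theorem natCard_quotient_maximalIdeal_pow (k : ℕ) :
    Nat.card (O ⧸ 𝔪 ^ k) = Nat.card (O ⧸ 𝔪) ^ k := by
  simpa only [Submodule.cardQuot_apply] using
    cardQuot_pow_of_prime (IsDiscreteValuationRing.not_a_field O) (i := k)

variable [Finite (O ⧸ IsLocalRing.maximalIdeal O)]

theorem finite_quotient_maximalIdeal_pow (k : ℕ) : Finite (O ⧸ 𝔪 ^ k) :=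
  Nat.finite_of_card_ne_zero <| by
    rw [natCard_quotient_maximalIdeal_pow]; exact pow_ne_zero _ Nat.card_pos.ne'

theorem ncard_roots_quotient_pow_le {P : O[X]} {v n : ℕ}
    (hsep : ∀ y, P.eval y ∈ 𝔪 ^ (v + 1) → P.derivative.eval y ∉ 𝔪 ^ (v + 1)) (hn : v + 1 ≤ n) :
    {x : O ⧸ 𝔪 ^ n | aeval x P = 0}.ncard ≤
      {x : O ⧸ 𝔪 ^ (v + 1) | aeval x P = 0}.ncard * Nat.card (O ⧸ 𝔪) ^ v := by
  have := finite_quotient_maximalIdeal_pow (O := O) n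
  have := finite_quotient_maximalIdeal_pow (O := O) (v + 1)
  let f := Ideal.Quotient.factor (Ideal.pow_le_pow_right hn : 𝔪 ^ n ≤ 𝔪 ^ (v + 1))
  let g := Ideal.Quotient.factor (Ideal.pow_le_pow_right (Nat.sub_le n v) : 𝔪 ^ n ≤ 𝔪 ^ (n - v))
  have hker : Nat.card g.toAddMonoidHom.ker = Nat.card (O ⧸ 𝔪) ^ v := by
    have := natCard_ker_factor_mul_natCard (Ideal.pow_le_pow_right (Nat.sub_le n v) :
      𝔪 ^ n ≤ 𝔪 ^ (n - v))
    rw [natCard_quotient_maximalIdeal_pow, natCard_quotient_maximalIdeal_pow] at this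
    refine Nat.eq_of_mul_eq_mul_right (pow_pos Nat.card_pos (n - v)) (this.trans ?_)
    rw [← pow_add]
    congr 1
    omega
  have hT : ∀ t ∈ {x : O ⧸ 𝔪 ^ n | aeval x P = 0}, ∀ t' ∈ {x : O ⧸ 𝔪 ^ n | aeval x P = 0},
      f t = f t' → g.toAddMonoidHom t = g.toAddMonoidHom t' := by
    rintro t ht t' ht' htt'
    obtain ⟨y, rfl⟩ := Ideal.Quotient.mk_surjective t
    obtain ⟨y', rfl⟩ := Ideal.Quotient.mk_surjective t'
    simp only [Set.mem_ofPred_eq, aeval_quotient_mk_eq_zero_iff] at ht ht'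
    simp only [f, g, RingHom.toAddMonoidHom_eq_coe, AddMonoidHom.coe_coe, Ideal.Quotient.factor_mk,
      Ideal.Quotient.mk_eq_mk_iff_sub_mem] at htt' ⊢
    exact sub_mem_maximalIdeal_pow_of_eval_mem (hsep y' (Ideal.pow_le_pow_right hn ht')) ht' ht htt'
  refine (ncard_le_ncard_image_mul_natCard_ker f g.toAddMonoidHom hT).trans ?_
  rw [hker]
  refine Nat.mul_le_mul_right _ (Set.ncard_le_ncard ?_ (Set.toFinite _))
  rintro _ ⟨t, ht, rfl⟩
  obtain ⟨y, rfl⟩ := Ideal.Quotient.mk_surjective t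
  simp only [Set.mem_ofPred_eq, aeval_quotient_mk_eq_zero_iff, f, Ideal.Quotient.factor_mk] at ht ⊢
  exact Ideal.pow_le_pow_right hn ht

theorem ncard_roots_quotient_pow_le_pow {P : O[X]} {v : ℕ}
    (hsep : ∀ y, P.eval y ∈ 𝔪 ^ (v + 1) → P.derivative.eval y ∉ 𝔪 ^ (v + 1)) (n : ℕ) :
    {x : O ⧸ 𝔪 ^ n | aeval x P = 0}.ncard ≤ Nat.card (O ⧸ 𝔪) ^ (2 * v + 1) := by
  have := finite_quotient_maximalIdeal_pow (O := O) n
  have := finite_quotient_maximalIdeal_pow (O := O) (v + 1)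
  have hq := Nat.card_pos (α := O ⧸ 𝔪)
  rcases le_or_gt (v + 1) n with hn | hn
  · calc _ ≤ {x : O ⧸ 𝔪 ^ (v + 1) | aeval x P = 0}.ncard * Nat.card (O ⧸ 𝔪) ^ v :=
          ncard_roots_quotient_pow_le hsep hn
      _ ≤ Nat.card (O ⧸ 𝔪) ^ (v + 1) * Nat.card (O ⧸ 𝔪) ^ v := by
          rw [← natCard_quotient_maximalIdeal_pow (v + 1)]
          exact Nat.mul_le_mul_right _ (Set.ncard_le_card _)
      _ = Nat.card (O ⧸ 𝔪) ^ (2 * v + 1) := by ring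
  · calc _ ≤ Nat.card (O ⧸ 𝔪 ^ n) := Set.ncard_le_card _
      _ = Nat.card (O ⧸ 𝔪) ^ n := natCard_quotient_maximalIdeal_pow n
      _ ≤ Nat.card (O ⧸ 𝔪) ^ (2 * v + 1) := Nat.pow_le_pow_right hq (by omega)

end DiscreteValuationRing

/-- The `p`-adic field `K` is represented by its ring of integers `O`; the hypothesis
`Disc P = π^v · w` with `w` a unit says `|Disc P|_𝔭 = q^{-v}`. -/
theorem stmt4_general (O : Type*) [CommRing O] [IsDomain O] [IsDiscreteValuationRing O]
    [CharZero O]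
    [Finite (O ⧸ IsLocalRing.maximalIdeal O)]
    (q : ℕ) (hq : Nat.card (O ⧸ IsLocalRing.maximalIdeal O) = q)
    (P : Polynomial O)
    (hprim : ∃ i, P.coeff i ∉ IsLocalRing.maximalIdeal O)
    (v : ℕ) (π w : O) (hπ : Irreducible π) (hw : IsUnit w)
    (hdisc : polyDisc (P.map (algebraMap O (FractionRing O)))
      = algebraMap O (FractionRing O) (π ^ v * w))
    (n : ℕ) (hn : 1 ≤ n) :
    {x : O ⧸ (IsLocalRing.maximalIdeal O) ^ n | Polynomial.aeval x P = 0}.Finite ∧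
    {x : O ⧸ (IsLocalRing.maximalIdeal O) ^ n | Polynomial.aeval x P = 0}.ncard
      ≤ max (q ^ v * P.natDegree) (q ^ (3 * v)) := by
  have := finite_quotient_maximalIdeal_pow (O := O) n
  refine ⟨Set.toFinite _, ?_⟩
  have hsep : ∀ y, P.eval y ∈ IsLocalRing.maximalIdeal O ^ (v + 1) →
      P.derivative.eval y ∉ IsLocalRing.maximalIdeal O ^ (v + 1) := by
    rcases le_or_gt P.natDegree 1 with hdeg | hdeg
    · exact fun y hy hy' => derivative_eval_notMem_of_natDegree_le_one hdeg hprim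
        (Ideal.pow_le_self (by omega) hy) (Ideal.pow_le_self (by omega) hy')
    · have hinj := IsFractionRing.injective O (FractionRing O)
      rw [polyDisc_eq_discr (by rw [natDegree_map_eq_of_injective hinj]; omega),
        discr_map_of_injective hinj (by omega)] at hdisc
      exact fun y => derivative_eval_notMem_of_discr_eq hdeg hπ hw (hinj hdisc)
  subst hq
  rcases Nat.eq_zero_or_pos v with rfl | hv
  · have : (IsLocalRing.maximalIdeal O ^ (0 + 1)).IsPrime := by
      rw [zero_add, pow_one]; infer_instance
    refine le_max_of_le_left ?_
    calc _ ≤ {x : O ⧸ IsLocalRing.maximalIdeal O ^ (0 + 1) | aeval x P = 0}.ncard *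
          Nat.card (O ⧸ IsLocalRing.maximalIdeal O) ^ 0 := ncard_roots_quotient_pow_le hsep hn
      _ ≤ _ := by
        rw [pow_zero, mul_one, one_mul]
        exact ncard_roots_quotient_le_natDegree (by simpa using hprim)
  · exact le_max_of_le_right <| (ncard_roots_quotient_pow_le_pow hsep n).trans <|
      Nat.pow_le_pow_right Nat.card_pos (by omega)

/-- Let `K` be a p-adic field with ring of integers `O` (formalized as a
complete discrete valuation ring of characteristic zero with finite residue field of
cardinality `q`), and let `P ∈ O[x]` be squarefree as an element of `K[x]` and not divisible
by a uniformizer. If the discriminant of `P` has valuation `v` (i.e.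
`Disc P = π^v · w` with `π` a uniformizer and `w` a unit, so that
`|Disc P|_𝔭 = q^{-v}`), then for every `n ≥ 1` the congruence `P(x) ≡ 0 (mod 𝔭ⁿ)` has at
most `max(q^v · deg P, q^{3v})` roots in `O/𝔭ⁿ`. -/
theorem stmt4 (O : Type*) [CommRing O] [IsDomain O] [IsDiscreteValuationRing O]
    [CharZero O] [IsAdicComplete (IsLocalRing.maximalIdeal O) O]
    [Finite (O ⧸ IsLocalRing.maximalIdeal O)]
    (q : ℕ) (hq : Nat.card (O ⧸ IsLocalRing.maximalIdeal O) = q)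
    (P : Polynomial O)
    (hP : Squarefree (P.map (algebraMap O (FractionRing O))))
    (hprim : ∃ i, P.coeff i ∉ IsLocalRing.maximalIdeal O)
    (v : ℕ) (π w : O) (hπ : Irreducible π) (hw : IsUnit w)
    (hdisc : polyDisc (P.map (algebraMap O (FractionRing O)))
      = algebraMap O (FractionRing O) (π ^ v * w))
    (n : ℕ) (hn : 1 ≤ n) :
    {x : O ⧸ (IsLocalRing.maximalIdeal O) ^ n | Polynomial.aeval x P = 0}.Finite ∧
    {x : O ⧸ (IsLocalRing.maximalIdeal O) ^ n | Polynomial.aeval x P = 0}.ncard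
      ≤ max (q ^ v * P.natDegree) (q ^ (3 * v)) :=
  stmt4_general O q hq P hprim v π w hπ hw hdisc n hn
end

section
/- For every ε > 0 there is a constant C_ε such that for all X ≥ 2, the sum over squarefree positive integers n of ∏_{p | n} (log X)/(p log p) is at most C_ε · X^ε. -/
/-!
A squarefree `n` is determined by its set of prime factors, so every partial sum is at most
`∏_{p < N} (1 + log X / (p log p))`. The series `∑_p 1 / (p log p)` converges (on the dyadic
block `2^k ≤ p < 2^(k+1)` it is at most `θ(2^(k+1)) / (2^k (k log 2)^2) ≪ 1 / k^2` by Chebyshev's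
bound `θ(x) ≤ x log 4`), so beyond some `P` its tail is below `ε / 2` and the large primes
contribute at most `exp ((ε / 2) log X) = X^(ε/2)`. Each of the at most `P + 1` small primes
contributes at most `1 + log X ≪_δ X^δ`, with `δ = ε / (2 (P + 1))`.
-/

open Finset Real

theorem Summable.exists_sum_lt_of_forall_le {f : ℕ → ℝ} (hf : Summable f) {η : ℝ} (hη : 0 < η) :
    ∃ P : ℕ, ∀ Q : Finset ℕ, (∀ n ∈ Q, P ≤ n) → ∑ n ∈ Q, f n < η := by
  obtain ⟨s, hs⟩ := hf.vanishing (Iio_mem_nhds hη)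
  obtain ⟨P, hsP⟩ := s.exists_nat_subset_range
  refine ⟨P, fun Q hQ => hs Q (disjoint_left.mpr fun n hnQ hns => ?_)⟩
  exact (hQ n hnQ).not_gt (mem_range.mp (hsP hns))

theorem sum_primesBelow_one_div_mul_log_le (N k : ℕ) :
    ∑ p ∈ N.primesBelow with Nat.log 2 p = k, 1 / (p * log p) ≤ 4 / (log 2 * k ^ 2) := by
  -- for `k = 0` the bound is `4 / 0 = 0`, and indeed the block `p < 2` contains no prime
  rcases Nat.eq_zero_or_pos k with rfl | hk
  · refine (sum_eq_zero fun p hp => ?_).le.trans (by simp)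
    obtain ⟨hpN, hlog⟩ := mem_filter.mp hp
    exact absurd hlog (Nat.log_pos one_lt_two (Nat.prime_of_mem_primesBelow hpN).two_le).ne'
  have hlog2 : 0 < log 2 := log_pos one_lt_two
  set c : ℝ := 2 ^ k * (k * log 2) ^ 2
  have hc : 0 < c := by positivity
  have hterm : ∀ p ∈ N.primesBelow.filter (Nat.log 2 · = k), 1 / (p * log p) ≤ log p / c := by
    intro p hp
    obtain ⟨hpN, hlog⟩ := mem_filter.mp hp
    have hp := Nat.prime_of_mem_primesBelow hpN
    have h2k : (2 : ℝ) ^ k ≤ p := by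
      exact_mod_cast hlog ▸ Nat.pow_log_le_self 2 hp.ne_zero
    have hkp : k * log 2 ≤ log p := by
      rw [← Real.log_pow]; exact log_le_log (by positivity) h2k
    have hlogp := hp.log_pos
    rw [div_le_div_iff₀ (mul_pos (Nat.cast_pos.mpr hp.pos) hlogp) hc, one_mul]
    calc c = 2 ^ k * (k * log 2) ^ 2 := rfl
      _ ≤ p * log p ^ 2 := by gcongr
      _ = log p * (p * log p) := by ring
  have hblock : N.primesBelow.filter (Nat.log 2 · = k) ⊆ (2 ^ (k + 1)).primesLE := by
    intro p hp
    obtain ⟨hpN, hlog⟩ := mem_filter.mp hp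
    refine Nat.mem_primesLE.mpr ⟨?_, Nat.prime_of_mem_primesBelow hpN⟩
    exact hlog ▸ (Nat.lt_pow_succ_log_self one_lt_two p).le
  calc ∑ p ∈ N.primesBelow with Nat.log 2 p = k, 1 / (p * log p)
      ≤ (∑ p ∈ N.primesBelow with Nat.log 2 p = k, log p) / c := by
        rw [sum_div]; exact sum_le_sum hterm
    _ ≤ Chebyshev.theta (2 ^ (k + 1) : ℕ) / c := by
        rw [Chebyshev.theta_eq_sum_primesLE_log]
        gcongr
    _ ≤ log 4 * 2 ^ (k + 1) / c := by
        gcongr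
        exact_mod_cast Chebyshev.theta_le_log4_mul_x (Nat.cast_nonneg _)
    _ = 4 / (log 2 * k ^ 2) := by
        rw [show (4 : ℝ) = 2 ^ 2 by norm_num, Real.log_pow]
        simp only [c]
        field_simp
        ring

theorem summable_one_div_mul_log_primes :
    Summable (fun n : ℕ => if n.Prime then 1 / (n * log n) else 0) := by
  have hnonneg (n : ℕ) : 0 ≤ if n.Prime then 1 / (n * log n) else 0 := by
    split_ifs with hp
    · have := hp.log_pos; positivity
    · exact le_rfl
  have hdyadic : Summable (fun k : ℕ => 4 / (log 2 * k ^ 2)) := by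
    refine ((Real.summable_nat_pow_inv.mpr one_lt_two).mul_left (4 / log 2)).congr fun k => ?_
    ring
  refine summable_of_sum_range_le (c := ∑' k : ℕ, 4 / (log 2 * k ^ 2)) hnonneg fun N => ?_
  have hmaps : ∀ p ∈ N.primesBelow, Nat.log 2 p ∈ range N := fun p hp =>
    mem_range.mpr ((Nat.log_le_self 2 p).trans_lt (Nat.lt_of_mem_primesBelow hp))
  calc ∑ n ∈ range N, (if n.Prime then 1 / (n * log n) else 0)
      = ∑ k ∈ range N, ∑ p ∈ N.primesBelow with Nat.log 2 p = k, 1 / (p * log p) := by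
        rw [sum_fiberwise_of_maps_to hmaps, ← sum_filter]; rfl
    _ ≤ ∑ k ∈ range N, 4 / (log 2 * k ^ 2) :=
        sum_le_sum fun k _ => sum_primesBelow_one_div_mul_log_le N k
    _ ≤ ∑' k : ℕ, 4 / (log 2 * k ^ 2) :=
        hdyadic.sum_le_tsum _ fun k _ => by positivity

theorem one_add_log_le_mul_rpow {δ X : ℝ} (hδ : 0 < δ) (hX : 1 ≤ X) :
    1 + log X ≤ (1 + δ⁻¹) * X ^ δ := by
  have hlog : log X ≤ X ^ δ / δ := log_le_rpow_div (by linarith) hδ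
  have hpow : 1 ≤ X ^ δ := one_le_rpow hX hδ.le
  rw [div_eq_inv_mul] at hlog
  nlinarith

theorem prod_one_add_div_mul_log_le_pow_card {L : ℝ} (hL : 0 ≤ L) {S : Finset ℕ}
    (hS : ∀ p ∈ S, p.Prime) : ∏ p ∈ S, (1 + L / (p * log p)) ≤ (1 + L) ^ S.card := by
  rw [← prod_const]
  refine prod_le_prod (fun p hp => ?_) fun p hp => ?_
  · have := (hS p hp).log_pos; positivity
  · have hp2 : (2 : ℝ) ≤ p := by exact_mod_cast (hS p hp).two_le
    -- `p log p ≥ 2 log 2 > 1`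
    have hden : 1 ≤ p * log p := by
      nlinarith [log_two_gt_d9, log_le_log two_pos hp2]
    gcongr
    exact div_le_self hL hden

theorem exists_prod_primes_one_add_log_div_le (ε : ℝ) (hε : 0 < ε) :
    ∃ C : ℝ, ∀ X : ℝ, 1 ≤ X → ∀ S : Finset ℕ, (∀ p ∈ S, p.Prime) →
      ∏ p ∈ S, (1 + log X / (p * log p)) ≤ C * X ^ ε := by
  obtain ⟨P, hP⟩ := summable_one_div_mul_log_primes.exists_sum_lt_of_forall_le (half_pos hε)
  set δ : ℝ := ε / 2 / (P + 1)
  have hδ : 0 < δ := by positivity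
  refine ⟨(1 + δ⁻¹) ^ (P + 1), fun X hX S hS => ?_⟩
  have hX0 : 0 < X := by linarith
  have hL : 0 ≤ log X := log_nonneg hX
  have hsmall : ∏ p ∈ S with p ≤ P, (1 + log X / (p * log p))
      ≤ (1 + δ⁻¹) ^ (P + 1) * X ^ (ε / 2) := by
    have hcard : (S.filter (· ≤ P)).card ≤ P + 1 := by
      simpa using card_le_card (s := S.filter (· ≤ P)) (t := range (P + 1))
        fun p hp => mem_range.mpr (Nat.lt_succ_of_le (mem_filter.mp hp).2)
    calc _ ≤ (1 + log X) ^ (S.filter (· ≤ P)).card :=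
          prod_one_add_div_mul_log_le_pow_card hL fun p hp => hS p (mem_filter.mp hp).1
      _ ≤ (1 + log X) ^ (P + 1) := pow_le_pow_right₀ (by linarith) hcard
      _ ≤ ((1 + δ⁻¹) * X ^ δ) ^ (P + 1) := by gcongr; exact one_add_log_le_mul_rpow hδ hX
      _ = (1 + δ⁻¹) ^ (P + 1) * X ^ (ε / 2) := by
          rw [mul_pow, ← rpow_mul_natCast hX0.le]
          congr 2
          simp only [δ]
          push_cast
          field_simp
  have hlarge : ∏ p ∈ S with ¬p ≤ P, (1 + log X / (p * log p)) ≤ X ^ (ε / 2) := by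
    have hsum : ∑ p ∈ S with ¬p ≤ P, 1 / (p * log p) ≤ ε / 2 := by
      refine le_of_eq_of_le (sum_congr rfl fun p hp => ?_) (hP _ fun p hp => ?_).le
      · exact (if_pos (hS p (mem_filter.mp hp).1)).symm
      · exact (not_le.mp (mem_filter.mp hp).2).le
    calc _ ≤ exp (∑ p ∈ S with ¬p ≤ P, log X / (p * log p)) :=
          prod_one_add_le_exp_sum _ fun p =>
            div_nonneg hL (mul_nonneg p.cast_nonneg (log_natCast_nonneg p))
      _ = exp (log X * ∑ p ∈ S with ¬p ≤ P, 1 / (p * log p)) := by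
          simp only [mul_sum, mul_one_div]
      _ ≤ X ^ (ε / 2) := by
          rw [rpow_def_of_pos hX0]
          gcongr
  calc ∏ p ∈ S, (1 + log X / (p * log p))
      = (∏ p ∈ S with p ≤ P, (1 + log X / (p * log p))) *
          ∏ p ∈ S with ¬p ≤ P, (1 + log X / (p * log p)) :=
        (prod_filter_mul_prod_filter_not S (· ≤ P) _).symm
    _ ≤ (1 + δ⁻¹) ^ (P + 1) * X ^ (ε / 2) * X ^ (ε / 2) := by
        gcongr
    _ = (1 + δ⁻¹) ^ (P + 1) * X ^ ε := by
        rw [mul_assoc, ← rpow_add hX0, add_halves]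

theorem sum_squarefree_prod_primeFactors_le_prod_one_add {g : ℕ → ℝ} (hg : ∀ p, 0 ≤ g p)
    (N : ℕ) :
    ∑ n ∈ range N, (if Squarefree n then ∏ p ∈ n.primeFactors, g p else 0)
      ≤ ∏ p ∈ N.primesBelow, (1 + g p) := by
  rw [← sum_filter, prod_one_add]
  have hinj : Set.InjOn Nat.primeFactors ((range N).filter Squarefree) := fun m hm n hn hmn => by
    rw [← Nat.prod_primeFactors_of_squarefree (mem_filter.mp hm).2,
      ← Nat.prod_primeFactors_of_squarefree (mem_filter.mp hn).2, hmn]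
  have himage : ((range N).filter Squarefree).image Nat.primeFactors ⊆ N.primesBelow.powerset := by
    simp only [subset_iff, mem_image, mem_filter, mem_range, mem_powerset, Nat.mem_primesBelow]
    rintro _ ⟨n, ⟨hnN, -⟩, rfl⟩ p hp
    exact ⟨(Nat.le_of_mem_primeFactors hp).trans_lt hnN, Nat.prime_of_mem_primeFactors hp⟩
  exact (sum_image (f := fun t => ∏ p ∈ t, g p) hinj).symm.trans_le
    (sum_le_sum_of_subset_of_nonneg himage fun t _ _ => prod_nonneg fun p _ => hg p)

/-- For every `ε > 0` there is a constant `C_ε` such that for all `X ≥ 2`,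
the sum over squarefree positive integers `n` of `∏_{p | n} (log X)/(p log p)` converges
and is at most `C_ε · X^ε`. -/
theorem stmt5 (ε : ℝ) (hε : 0 < ε) :
    ∃ C : ℝ, ∀ X : ℝ, 2 ≤ X →
      Summable (fun n : ℕ => if Squarefree n then
          ∏ p ∈ n.primeFactors, Real.log X / (p * Real.log p) else 0) ∧
      (∑' n : ℕ, if Squarefree n then
          ∏ p ∈ n.primeFactors, Real.log X / (p * Real.log p) else 0)
        ≤ C * X ^ ε := by
  obtain ⟨C, hC⟩ := exists_prod_primes_one_add_log_div_le ε hε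
  refine ⟨C, fun X hX => ?_⟩
  have hg (p : ℕ) : 0 ≤ Real.log X / (p * Real.log p) :=
    div_nonneg (log_nonneg (by linarith)) (mul_nonneg p.cast_nonneg (log_natCast_nonneg p))
  have hnonneg (n : ℕ) : 0 ≤ if Squarefree n then
      ∏ p ∈ n.primeFactors, Real.log X / (p * Real.log p) else 0 := by
    split_ifs
    exacts [prod_nonneg fun p _ => hg p, le_rfl]
  have hpartial (N : ℕ) : ∑ n ∈ range N, (if Squarefree n then
      ∏ p ∈ n.primeFactors, Real.log X / (p * Real.log p) else 0) ≤ C * X ^ ε :=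
    (sum_squarefree_prod_primeFactors_le_prod_one_add hg N).trans
      (hC X (by linarith) _ fun p => Nat.prime_of_mem_primesBelow)
  exact ⟨summable_of_sum_range_le hnonneg hpartial, Real.tsum_le_of_sum_range_le hnonneg hpartial⟩
end

section
/- Fix c₀ > 0. For every ε > 0, (1/N) · Σ_{n ≤ N squarefree} τ(n) · ∏_{p|n} (c₀ log N)/(log p) = O(N^ε), where τ is the number-of-divisors function and the implied constant depends only on c₀ and ε. -/
open scoped BigOperators
open Finset

lemma tail_small' {g : ℕ → ℝ} (hg : Summable g) {η : ℝ} (hη : 0 < η) :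
    ∃ y : ℕ, ∀ t : Finset ℕ, (∀ m ∈ t, y ≤ m) → ∑ m ∈ t, g m ≤ η := by
  obtain ⟨s, hs⟩ := summable_iff_vanishing.mp hg (Set.Iio η) (Iio_mem_nhds hη)
  refine ⟨s.sup id + 1, fun t ht => ?_⟩
  have hd : Disjoint t s := by
    rw [Finset.disjoint_left]
    intro m hm hms
    have h1 : m ≤ s.sup id := Finset.le_sup (f := id) hms
    have h2 := ht m hm
    omega
  exact le_of_lt (hs t hd)

lemma eventually_bound' {f g : ℕ → ℝ} (hg : ∀ N, 2 ≤ N → 0 < g N)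
    (h : ∀ᶠ N in Filter.atTop, f N ≤ g N) :
    ∃ C, ∀ N, 2 ≤ N → f N ≤ C * g N := by
  obtain ⟨N₀, hN₀⟩ := Filter.eventually_atTop.mp h
  refine ⟨1 + ∑ n ∈ Finset.Icc 2 N₀, max 0 (f n / g n), fun N h2 => ?_⟩
  have hsum : (0:ℝ) ≤ ∑ n ∈ Finset.Icc 2 N₀, max 0 (f n / g n) :=
    Finset.sum_nonneg fun n _ => le_max_left _ _
  rcases le_or_gt N₀ N with hN | hN
  · calc f N ≤ g N := hN₀ N hN
      _ = 1 * g N := (one_mul _).symm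
      _ ≤ _ := by
        apply mul_le_mul_of_nonneg_right _ (hg N h2).le
        linarith
  · have hmem : N ∈ Finset.Icc 2 N₀ := Finset.mem_Icc.mpr ⟨h2, hN.le⟩
    have h1 : f N / g N ≤ ∑ n ∈ Finset.Icc 2 N₀, max 0 (f n / g n) :=
      le_trans (le_max_right _ _)
        (Finset.single_le_sum (f := fun n => max 0 (f n / g n))
          (fun n _ => le_max_left _ _) hmem)
    have h1' : f N / g N ≤ 1 + ∑ n ∈ Finset.Icc 2 N₀, max 0 (f n / g n) := by linarith
    exact (div_le_iff₀ (hg N h2)).mp h1'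

lemma sf_card_divisors {n : ℕ} (hn : Squarefree n) :
    n.divisors.card = 2 ^ n.primeFactors.card := by
  rw [Nat.card_divisors hn.ne_zero, ← Finset.prod_const]
  refine Finset.prod_congr rfl fun p hp => ?_
  have h1 : n.factorization p ≤ 1 := hn.natFactorization_le_one p
  have h0 : n.factorization p ≠ 0 := by
    rw [← Nat.support_factorization] at hp
    exact Finsupp.mem_support_iff.mp hp
  omega

/-- Fix `c₀ > 0`. For every `ε > 0` there is a constant `C` (depending only
on `c₀` and `ε`) such that for all integers `N ≥ 2`,
`(1/N) · Σ_{n ≤ N squarefree} τ(n) · ∏_{p|n} (c₀ log N)/(log p) ≤ C · N^ε`,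
where `τ(n)` is the number of positive divisors of `n`. -/
theorem stmt6 (c₀ : ℝ) (hc₀ : 0 < c₀) (ε : ℝ) (hε : 0 < ε) :
    ∃ C : ℝ, ∀ N : ℕ, 2 ≤ N →
      (1 / (N : ℝ)) *
        ∑ n ∈ (Finset.Icc 1 N).filter Squarefree,
          (n.divisors.card : ℝ) * ∏ p ∈ n.primeFactors, c₀ * Real.log N / Real.log p
        ≤ C * (N : ℝ) ^ ε := by
  classical
  have hlog2 : (0:ℝ) < Real.log 2 := Real.log_pos one_lt_two
  set σ : ℝ := 1 + ε/2 with hσdef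
  have hσ1 : (1:ℝ) ≤ σ := by simp only [hσdef]; linarith
  have hsummable : Summable (fun m : ℕ => (m:ℝ) ^ (-σ)) := by
    rw [Real.summable_nat_rpow]
    simp only [hσdef]; linarith
  obtain ⟨y, hy⟩ := tail_small' hsummable (η := ε * Real.log 2 / (8 * c₀)) (by positivity)
  set B : ℝ := c₀ / Real.log 2 with hBdef
  have hB : 0 < B := by positivity
  -- E1 : eventually (1 + B log N)^y ≤ N^(ε/4)
  have E1 : ∀ᶠ N : ℕ in Filter.atTop, (1 + B * Real.log N) ^ y ≤ (N:ℝ) ^ (ε/4) := by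
    set δ : ℝ := ε / (4 * (y+1)) with hδdef
    have hδ : 0 < δ := by positivity
    have hlo : (fun x : ℝ => 1 + B * Real.log x) =o[Filter.atTop] fun x => x ^ δ := by
      apply Asymptotics.IsLittleO.add
      · refine Asymptotics.isLittleO_const_left.mpr (Or.inr ?_)
        exact Filter.tendsto_abs_atTop_atTop.comp (tendsto_rpow_atTop hδ)
      · exact (isLittleO_log_rpow_atTop hδ).const_mul_left B
    have hbound := hlo.bound one_pos
    have hreal : ∀ᶠ x : ℝ in Filter.atTop,
        (1 + B * Real.log x) ^ y ≤ x ^ (ε/4) := by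
      filter_upwards [hbound, Filter.eventually_ge_atTop (1:ℝ)] with x hb hx1
      have hxδ : (0:ℝ) ≤ x ^ δ := Real.rpow_nonneg (by linarith) δ
      have h1 : 1 + B * Real.log x ≤ x ^ δ := by
        have := hb
        rw [Real.norm_eq_abs, Real.norm_eq_abs, one_mul] at this
        calc 1 + B * Real.log x ≤ |1 + B * Real.log x| := le_abs_self _
          _ ≤ |x ^ δ| := this
          _ = x ^ δ := abs_of_nonneg hxδ
      have h0 : (0:ℝ) ≤ 1 + B * Real.log x := by
        have : 0 ≤ Real.log x := Real.log_nonneg hx1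
        nlinarith
      calc (1 + B * Real.log x) ^ y ≤ (x ^ δ) ^ y := pow_le_pow_left₀ h0 h1 y
        _ = x ^ (δ * y) := by
            rw [← Real.rpow_natCast (x ^ δ) y, ← Real.rpow_mul (by linarith)]
        _ ≤ x ^ (ε/4) := by
            apply Real.rpow_le_rpow_of_exponent_le hx1
            rw [hδdef]
            rw [div_mul_eq_mul_div, div_le_div_iff₀ (by positivity) (by norm_num)]
            have : (y:ℝ) ≤ y + 1 := by linarith
            nlinarith [hε.le]
    exact Filter.Tendsto.eventually tendsto_natCast_atTop_atTop hreal
  apply eventually_bound' (g := fun N : ℕ => (N:ℝ) ^ ε)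
    (fun N h2 => Real.rpow_pos_of_pos (by exact_mod_cast (show 0 < N by omega)) ε)
  filter_upwards [E1, Filter.eventually_ge_atTop 2] with N hE1 h2
  -- Main chain for fixed N ≥ 2
  have hN0 : (0:ℝ) < (N:ℝ) := by exact_mod_cast (by omega : 0 < N)
  have hN1 : (1:ℝ) ≤ (N:ℝ) := by exact_mod_cast (by omega : 1 ≤ N)
  set L : ℝ := Real.log N with hLdef
  have hL0 : 0 ≤ L := Real.log_nonneg hN1
  set F : ℕ → ℝ := fun p => 2 * c₀ * L / ((p:ℝ) ^ σ * Real.log p) with hFdef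
  have hF0 : ∀ p : ℕ, 0 ≤ F p := by
    intro p
    apply div_nonneg (by positivity)
    apply mul_nonneg (Real.rpow_nonneg (Nat.cast_nonneg p) σ)
    rcases Nat.eq_zero_or_pos p with h | h
    · simp [h]
    · exact Real.log_nonneg (by exact_mod_cast h)
  set A := (Finset.Icc 1 N).filter Squarefree with hAdef
  set P := (Finset.range (N+1)).filter Nat.Prime with hPdef
  -- Step 1+2 : termwise bound
  have key : ∀ n ∈ A, (n.divisors.card : ℝ) * (∏ p ∈ n.primeFactors, c₀ * L / Real.log p)
      ≤ (N:ℝ)^σ * ∏ p ∈ n.primeFactors, F p := by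
    intro n hn
    rw [hAdef, Finset.mem_filter, Finset.mem_Icc] at hn
    obtain ⟨⟨hn1, hnN⟩, hsf⟩ := hn
    have h1 : (n.divisors.card : ℝ) = ∏ _p ∈ n.primeFactors, (2:ℝ) := by
      rw [sf_card_divisors hsf, Finset.prod_const]
      push_cast
      ring
    rw [h1, ← Finset.prod_mul_distrib]
    have h2 : ∀ p ∈ n.primeFactors, 2 * (c₀ * L / Real.log p) = F p * (p:ℝ)^σ := by
      intro p hp
      have hp2 : 2 ≤ p := (Nat.prime_of_mem_primeFactors hp).two_le
      have hppos : (0:ℝ) < (p:ℝ) := by exact_mod_cast (by omega : 0 < p)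
      have hlogp : 0 < Real.log p := Real.log_pos (by exact_mod_cast (by omega : 1 < p))
      have hpσ : (0:ℝ) < (p:ℝ)^σ := Real.rpow_pos_of_pos hppos σ
      rw [hFdef]
      field_simp
    rw [Finset.prod_congr rfl h2, Finset.prod_mul_distrib]
    have h3 : ∏ p ∈ n.primeFactors, (p:ℝ)^σ = (n:ℝ)^σ := by
      rw [Real.finset_prod_rpow _ _ (fun p _ => Nat.cast_nonneg p)]
      rw [← Nat.cast_prod, Nat.prod_primeFactors_of_squarefree hsf]
    rw [h3, mul_comm ((N:ℝ)^σ) _]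
    apply mul_le_mul_of_nonneg_left _ (Finset.prod_nonneg fun p _ => hF0 p)
    exact Real.rpow_le_rpow (by positivity) (by exact_mod_cast hnN) (by positivity)
  -- Step 3 : sum over squarefree ≤ product over primes
  have step3 : ∑ n ∈ A, ∏ p ∈ n.primeFactors, F p ≤ ∏ p ∈ P, (1 + F p) := by
    have hinj : ∀ m ∈ A, ∀ n ∈ A, m.primeFactors = n.primeFactors → m = n := by
      intro m hm n hn hmn
      rw [hAdef, Finset.mem_filter] at hm hn
      rw [← Nat.prod_primeFactors_of_squarefree hm.2, ← Nat.prod_primeFactors_of_squarefree hn.2,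
        hmn]
    have himg : ∑ n ∈ A, ∏ p ∈ n.primeFactors, F p
        = ∑ t ∈ A.image Nat.primeFactors, ∏ p ∈ t, F p := by
      rw [Finset.sum_image hinj]
    have hsub : A.image Nat.primeFactors ⊆ P.powerset := by
      intro t ht
      obtain ⟨n, hn, rfl⟩ := Finset.mem_image.mp ht
      rw [hAdef, Finset.mem_filter, Finset.mem_Icc] at hn
      rw [Finset.mem_powerset]
      intro p hp
      rw [hPdef, Finset.mem_filter, Finset.mem_range]
      constructor
      · have := Nat.le_of_dvd (by omega) (Nat.dvd_of_mem_primeFactors hp)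
        omega
      · exact Nat.prime_of_mem_primeFactors hp
    have hprodadd : ∏ p ∈ P, (1 + F p) = ∑ t ∈ P.powerset, ∏ p ∈ t, F p := by
      have h := Finset.prod_add F (fun _ => (1:ℝ)) P
      simp only [Finset.prod_const_one, mul_one] at h
      rw [← h]
      exact Finset.prod_congr rfl fun p _ => add_comm _ _
    rw [himg, hprodadd]
    exact Finset.sum_le_sum_of_subset_of_nonneg hsub
      (fun t _ _ => Finset.prod_nonneg fun p _ => hF0 p)
  -- Step 4 : bound the product over primes
  have hF_le : ∀ p ∈ P, 1 + F p ≤ 1 + B * L := by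
    intro p hp
    rw [hPdef, Finset.mem_filter] at hp
    have hp2 : 2 ≤ p := hp.2.two_le
    have h2p : (2:ℝ) ≤ (p:ℝ) := by exact_mod_cast hp2
    have hlogp : Real.log 2 ≤ Real.log p := Real.log_le_log (by norm_num) h2p
    have hpσ : (2:ℝ) ≤ (p:ℝ)^σ := by
      calc (2:ℝ) ≤ (p:ℝ) := h2p
        _ = (p:ℝ)^(1:ℝ) := (Real.rpow_one _).symm
        _ ≤ (p:ℝ)^σ := Real.rpow_le_rpow_of_exponent_le (by linarith) hσ1
    have hden : 2 * Real.log 2 ≤ (p:ℝ)^σ * Real.log p :=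
      mul_le_mul hpσ hlogp hlog2.le (by linarith)
    have hFp : F p ≤ 2 * c₀ * L / (2 * Real.log 2) := by
      rw [hFdef]
      apply div_le_div_of_nonneg_left (by positivity) (by positivity) hden
    have heq : 2 * c₀ * L / (2 * Real.log 2) = B * L := by
      rw [hBdef, div_mul_eq_mul_div, div_eq_div_iff (by positivity) (by positivity)]
      ring
    rw [heq] at hFp
    linarith
  have h1BL : (1:ℝ) ≤ 1 + B * L := by nlinarith [mul_nonneg hB.le hL0]
  have hP1 : ∏ p ∈ P.filter (· < y), (1 + F p) ≤ (1 + B*L)^y := by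
    have hcard : (P.filter (· < y)).card ≤ y := by
      have hss : P.filter (· < y) ⊆ Finset.range y := by
        intro p hp
        exact Finset.mem_range.mpr (Finset.mem_filter.mp hp).2
      calc (P.filter (· < y)).card ≤ (Finset.range y).card := Finset.card_le_card hss
        _ = y := Finset.card_range y
    calc ∏ p ∈ P.filter (· < y), (1 + F p) ≤ ∏ _p ∈ P.filter (· < y), (1 + B*L) :=
        Finset.prod_le_prod (fun p _ => by linarith [hF0 p])
          (fun p hp => hF_le p (Finset.mem_of_mem_filter p hp))
      _ = (1 + B*L)^(P.filter (· < y)).card := Finset.prod_const _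
      _ ≤ (1 + B*L)^y := pow_le_pow_right₀ h1BL hcard
  have hP2 : ∏ p ∈ P.filter (fun p => ¬ p < y), (1 + F p) ≤ Real.exp (ε/4 * L) := by
    have hFle2 : ∀ p ∈ P.filter (fun p => ¬ p < y),
        F p ≤ (2*c₀*L/Real.log 2) * (p:ℝ)^(-σ) := by
      intro p hp
      have hpP := Finset.mem_of_mem_filter p hp
      rw [hPdef, Finset.mem_filter] at hpP
      have hp2 : 2 ≤ p := hpP.2.two_le
      have h2p : (2:ℝ) ≤ (p:ℝ) := by exact_mod_cast hp2
      have hlogp : Real.log 2 ≤ Real.log p := Real.log_le_log (by norm_num) h2p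
      have hpσ : (0:ℝ) < (p:ℝ)^σ := Real.rpow_pos_of_pos (by linarith) σ
      have h1 : F p ≤ 2*c₀*L / ((p:ℝ)^σ * Real.log 2) := by
        rw [hFdef]
        apply div_le_div_of_nonneg_left (by positivity) (by positivity)
        exact mul_le_mul_of_nonneg_left hlogp hpσ.le
      calc F p ≤ 2*c₀*L / ((p:ℝ)^σ * Real.log 2) := h1
        _ = (2*c₀*L/Real.log 2) * (p:ℝ)^(-σ) := by
            rw [Real.rpow_neg (by positivity), ← div_eq_mul_inv, div_div,
              mul_comm (Real.log 2)]
    have htail : ∑ p ∈ P.filter (fun p => ¬ p < y), (p:ℝ)^(-σ) ≤ ε * Real.log 2 / (8 * c₀) := by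
      apply hy
      intro m hm
      have := (Finset.mem_filter.mp hm).2
      omega
    have hsumF : ∑ p ∈ P.filter (fun p => ¬ p < y), F p ≤ ε/4 * L := by
      calc ∑ p ∈ P.filter (fun p => ¬ p < y), F p
          ≤ ∑ p ∈ P.filter (fun p => ¬ p < y), (2*c₀*L/Real.log 2) * (p:ℝ)^(-σ) :=
            Finset.sum_le_sum hFle2
        _ = (2*c₀*L/Real.log 2) * ∑ p ∈ P.filter (fun p => ¬ p < y), (p:ℝ)^(-σ) := by
            rw [Finset.mul_sum]
        _ ≤ (2*c₀*L/Real.log 2) * (ε * Real.log 2 / (8 * c₀)) := by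
            apply mul_le_mul_of_nonneg_left htail (by positivity)
        _ = ε/4 * L := by
            field_simp
            ring
    calc ∏ p ∈ P.filter (fun p => ¬ p < y), (1 + F p)
        ≤ ∏ p ∈ P.filter (fun p => ¬ p < y), Real.exp (F p) := by
          apply Finset.prod_le_prod (fun p _ => by linarith [hF0 p])
          intro p _
          linarith [Real.add_one_le_exp (F p)]
      _ = Real.exp (∑ p ∈ P.filter (fun p => ¬ p < y), F p) := (Real.exp_sum _ _).symm
      _ ≤ Real.exp (ε/4 * L) := Real.exp_le_exp.mpr hsumF
  have hexpL : Real.exp (ε/4 * L) = (N:ℝ)^(ε/4) := by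
    rw [Real.rpow_def_of_pos hN0, mul_comm]
  -- assemble
  have hprodP : ∏ p ∈ P, (1 + F p) ≤ (N:ℝ)^(ε/4) * (N:ℝ)^(ε/4) := by
    rw [← Finset.prod_filter_mul_prod_filter_not P (· < y)]
    have hnn : (0:ℝ) ≤ ∏ p ∈ P.filter (fun p => ¬ p < y), (1 + F p) :=
      Finset.prod_nonneg fun p _ => by linarith [hF0 p]
    have hP2' : ∏ p ∈ P.filter (fun p => ¬ p < y), (1 + F p) ≤ (N:ℝ)^(ε/4) := by
      rw [← hexpL]; exact hP2
    exact mul_le_mul (le_trans hP1 hE1) hP2' hnn (Real.rpow_nonneg hN0.le _)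
  have hchain : ∑ n ∈ A, (n.divisors.card : ℝ) * (∏ p ∈ n.primeFactors, c₀ * L / Real.log p)
      ≤ (N:ℝ)^σ * ((N:ℝ)^(ε/4) * (N:ℝ)^(ε/4)) := by
    calc ∑ n ∈ A, (n.divisors.card : ℝ) * (∏ p ∈ n.primeFactors, c₀ * L / Real.log p)
        ≤ ∑ n ∈ A, (N:ℝ)^σ * ∏ p ∈ n.primeFactors, F p := Finset.sum_le_sum key
      _ = (N:ℝ)^σ * ∑ n ∈ A, ∏ p ∈ n.primeFactors, F p := by rw [Finset.mul_sum]
      _ ≤ (N:ℝ)^σ * ∏ p ∈ P, (1 + F p) := by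
          apply mul_le_mul_of_nonneg_left step3 (Real.rpow_nonneg hN0.le _)
      _ ≤ (N:ℝ)^σ * ((N:ℝ)^(ε/4) * (N:ℝ)^(ε/4)) := by
          apply mul_le_mul_of_nonneg_left hprodP (Real.rpow_nonneg hN0.le _)
  have hcomb : (N:ℝ)^σ * ((N:ℝ)^(ε/4) * (N:ℝ)^(ε/4)) = (N:ℝ) * (N:ℝ)^ε := by
    rw [← Real.rpow_add hN0, ← Real.rpow_add hN0]
    rw [show σ + (ε/4 + ε/4) = 1 + ε by rw [hσdef]; ring]
    rw [Real.rpow_add hN0, Real.rpow_one]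
  rw [hcomb] at hchain
  calc (1 / (N:ℝ)) * ∑ n ∈ A, (n.divisors.card : ℝ) *
        (∏ p ∈ n.primeFactors, c₀ * L / Real.log p)
      ≤ (1 / (N:ℝ)) * ((N:ℝ) * (N:ℝ)^ε) := by
        apply mul_le_mul_of_nonneg_left hchain (by positivity)
    _ = (N:ℝ)^ε := by
        field_simp
end

section
/- There is an absolute constant C with the following property: for all k ≥ 3, Σ_{p > k, p prime} 1/(p log p) ≤ (2 log 2 + C/log k)/log k. -/
/-!
Write `w n = 1 / (n log² n)`, so that `1 / (p log p) = (θ p - θ (p - 1)) w p` for primes `p`.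
Summation by parts moves the differences of Chebyshev's `θ` onto the differences of `w`, where
Chebyshev's bound `θ n ≤ n log 4` applies. What remains telescopes, because
`n (w n - w (n + 1)) ≤ F n - F (n + 1)` for `F x = 1 / log x + 1 / log² x`, leaving
`Σ_{p > a} 1 / (p log p) ≤ log 4 · F (a + 1)`.
-/

open Finset Real Chebyshev

theorem sum_Ioc_sub_mul_le {S w F : ℕ → ℝ} {c : ℝ} {a N : ℕ} (hc : 0 ≤ c) (haN : a ≤ N)
    (hS : ∀ n, a < n → S n ≤ c * n) (hw : ∀ n, a < n → w (n + 1) ≤ w n)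
    (hF : ∀ n, a < n → n * (w n - w (n + 1)) ≤ F n - F (n + 1)) :
    ∑ n ∈ Ioc a N, (S n - S (n - 1)) * w n ≤
      S N * w (N + 1) - S a * w (a + 1) + c * (F (a + 1) - F (N + 1)) := by
  induction N, haN using Nat.le_induction with
  | base => simp
  | succ N haN ih =>
    have hN : a < N + 1 := Nat.lt_succ_of_le haN
    have hSw : S (N + 1) * (w (N + 1) - w (N + 2)) ≤ c * (N + 1) * (w (N + 1) - w (N + 2)) := by
      have := hS (N + 1) hN
      push_cast at this
      exact mul_le_mul_of_nonneg_right this (sub_nonneg.2 (hw _ hN))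
    have hcF := mul_le_mul_of_nonneg_left (hF (N + 1) hN) hc
    rw [sum_Ioc_succ_top haN, Nat.add_sub_cancel]
    push_cast at hcF ⊢
    linarith

theorem antitoneOn_inv_mul_log_sq : AntitoneOn (fun x : ℝ ↦ 1 / (x * log x ^ 2)) (Set.Ioi 1) := by
  intro x hx y hy hxy
  have hx₀ : (0 : ℝ) < x := by linarith [Set.mem_Ioi.1 hx]
  have hlog : 0 < log x := log_pos hx
  have hy₀ : (0 : ℝ) < y := hx₀.trans_le hxy
  dsimp only
  gcongr

theorem inv_mul_log_sq_le_inv_log_sub_inv_log {x : ℝ} (hx : 1 < x) :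
    1 / ((x + 1) * log (x + 1) ^ 2) ≤ 1 / log x - 1 / log (x + 1) := by
  have hx₀ : 0 < x := by linarith
  have hlog : 0 < log x := log_pos hx
  have hlog_lt : log x < log (x + 1) := log_lt_log hx₀ (by linarith)
  have hlog' : 0 < log (x + 1) := hlog.trans hlog_lt
  have hgap : 1 / (x + 1) ≤ log (x + 1) - log x := by
    have := one_sub_inv_le_log_of_pos (show 0 < (x + 1) / x by positivity)
    rwa [log_div (by positivity) hx₀.ne', inv_div, one_sub_div (by positivity),
      add_sub_cancel_left] at this
  calc 1 / ((x + 1) * log (x + 1) ^ 2)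
      = 1 / (x + 1) / (log (x + 1) * log (x + 1)) := by field_simp
    _ ≤ (log (x + 1) - log x) / (log x * log (x + 1)) := by gcongr
    _ = 1 / log x - 1 / log (x + 1) := by field_simp

theorem mul_sub_inv_mul_log_sq_le {x : ℝ} (hx : 1 < x) :
    x * (1 / (x * log x ^ 2) - 1 / ((x + 1) * log (x + 1) ^ 2)) ≤
      (1 / log x + 1 / log x ^ 2) - (1 / log (x + 1) + 1 / log (x + 1) ^ 2) := by
  have hx₀ : 0 < x := by linarith
  have hlog : 0 < log x := log_pos hx
  have hlog' : 0 < log (x + 1) := log_pos (by linarith)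
  have hsplit : x * (1 / (x * log x ^ 2) - 1 / ((x + 1) * log (x + 1) ^ 2)) =
      1 / log x ^ 2 - 1 / log (x + 1) ^ 2 + 1 / ((x + 1) * log (x + 1) ^ 2) := by
    field_simp
    ring
  rw [hsplit]
  linarith [inv_mul_log_sq_le_inv_log_sub_inv_log hx]

theorem theta_natCast_sub_theta_pred {n : ℕ} (hn : 0 < n) :
    θ n - θ ↑(n - 1) = if n.Prime then log n else 0 := by
  obtain ⟨m, rfl⟩ := Nat.exists_eq_add_of_lt hn
  simp only [theta, Nat.floor_natCast, zero_add, Nat.add_sub_cancel, sum_filter,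
    sum_Ioc_succ_top (Nat.zero_le m)]
  ring

theorem ite_prime_inv_mul_log_eq {n : ℕ} (hn : 1 < n) :
    (if n.Prime then 1 / ((n : ℝ) * log n) else 0) =
      (θ n - θ ↑(n - 1)) * (1 / (n * log n ^ 2)) := by
  have hlog : 0 < log (n : ℝ) := log_pos (by exact_mod_cast hn)
  rw [theta_natCast_sub_theta_pred (by omega)]
  split_ifs
  · field_simp
  · simp

theorem sum_Ioc_prime_inv_mul_log_le {a : ℕ} (ha : 0 < a) (N : ℕ) :
    ∑ p ∈ Ioc a N with p.Prime, 1 / ((p : ℝ) * log p) ≤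
      log 4 * (1 / log ((a : ℝ) + 1) + 1 / log ((a : ℝ) + 1) ^ 2) := by
  have hlog4 : 0 ≤ log 4 := log_nonneg (by norm_num)
  have hloga : 0 < log ((a : ℝ) + 1) := log_pos (by norm_cast; omega)
  rcases lt_or_ge N a with hNa | haN
  · rw [Ioc_eq_empty_of_le hNa.le, filter_empty, sum_empty]
    positivity
  set w : ℕ → ℝ := fun n ↦ 1 / (n * log n ^ 2) with hw_def
  have hone_lt {n : ℕ} (hn : a < n) : (1 : ℝ) < n := by norm_cast; omega
  have habel := sum_Ioc_sub_mul_le (S := fun n ↦ θ n) (w := w)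
    (F := fun n ↦ 1 / log n + 1 / log n ^ 2) hlog4 haN
    (fun n _ ↦ theta_le_log4_mul_x n.cast_nonneg)
    (fun n hn ↦ by
      simpa [hw_def] using antitoneOn_inv_mul_log_sq (hone_lt hn)
        (show (1 : ℝ) < n + 1 by linarith [hone_lt hn]) (by linarith))
    (fun n hn ↦ by simpa [hw_def] using mul_sub_inv_mul_log_sq_le (hone_lt hn))
  have hterm : ∀ n ∈ Ioc a N, (if n.Prime then 1 / ((n : ℝ) * log n) else 0) =
      (θ n - θ ↑(n - 1)) * w n := fun n hn ↦
    ite_prime_inv_mul_log_eq (by exact_mod_cast hone_lt (mem_Ioc.1 hn).1)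
  have htail : θ N * w (N + 1) ≤ log 4 * (1 / log ((N : ℝ) + 1) + 1 / log ((N : ℝ) + 1) ^ 2) := by
    have hN : 0 < log ((N : ℝ) + 1) := log_pos (by norm_cast; omega)
    calc θ N * w (N + 1) ≤ log 4 * (N + 1) * w (N + 1) :=
          mul_le_mul_of_nonneg_right (by linarith [theta_le_log4_mul_x N.cast_nonneg])
            (by simp only [hw_def]; positivity)
      _ = log 4 * (1 / log ((N : ℝ) + 1) ^ 2) := by
          simp only [hw_def, Nat.cast_add_one]
          field_simp
      _ ≤ _ := mul_le_mul_of_nonneg_left (le_add_of_nonneg_left (by positivity)) hlog4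
  have hhead : 0 ≤ θ a * w (a + 1) := mul_nonneg (theta_nonneg _) (by positivity)
  rw [sum_filter, sum_congr rfl hterm]
  push_cast at habel htail
  linarith

theorem tsum_subtype_lt_le_of_sum_Ioc_le {P : ℕ → Prop} [DecidablePred P] {f : ℕ → ℝ}
    {k B : ℝ} (hk : 0 ≤ k) (hf : ∀ n, 0 ≤ f n)
    (h : ∀ N, ∑ n ∈ Ioc ⌊k⌋₊ N with P n, f n ≤ B) :
    ∑' n : {n : ℕ // P n ∧ k < n}, f n ≤ B := by
  refine tsum_le_of_sum_le' (by simpa using h 0) fun s ↦ ?_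
  calc ∑ n ∈ s, f n = ∑ n ∈ s.map (Function.Embedding.subtype _), f n := by rw [sum_map]; rfl
    _ ≤ ∑ n ∈ Ioc ⌊k⌋₊ (s.sup Subtype.val) with P n, f n := by
        refine sum_le_sum_of_subset_of_nonneg (fun n hn ↦ ?_) fun n _ _ ↦ hf n
        obtain ⟨x, hx, rfl⟩ := mem_map.1 hn
        exact mem_filter.2 ⟨mem_Ioc.2 ⟨(Nat.floor_lt hk).2 x.2.2, le_sup (f := Subtype.val) hx⟩,
          x.2.1⟩
    _ ≤ B := h _

/-- There is an absolute constant `C` such that for all real `k ≥ 3`,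
`Σ_{p > k, p prime} 1/(p log p) ≤ (2 log 2 + C / log k) / log k`. -/
theorem stmt7 :
    ∃ C : ℝ, ∀ k : ℝ, 3 ≤ k →
      (∑' p : {p : ℕ // p.Prime ∧ k < (p : ℝ)},
          1 / ((p : ℝ) * Real.log (p : ℕ)))
        ≤ (2 * Real.log 2 + C / Real.log k) / Real.log k := by
  refine ⟨2 * log 2, fun k hk ↦ ?_⟩
  have hlogk : 0 < log k := log_pos (by linarith)
  have hlog_le : log k ≤ log (⌊k⌋₊ + 1) := log_le_log (by linarith) (Nat.lt_floor_add_one k).le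
  refine tsum_subtype_lt_le_of_sum_Ioc_le (P := Nat.Prime)
    (f := fun n ↦ 1 / ((n : ℝ) * log n)) (by linarith) (fun n ↦ by positivity) fun N ↦ ?_
  calc _ ≤ log 4 * (1 / log ((⌊k⌋₊ : ℝ) + 1) + 1 / log ((⌊k⌋₊ : ℝ) + 1) ^ 2) :=
        sum_Ioc_prime_inv_mul_log_le (Nat.floor_pos.2 (by linarith)) N
    _ ≤ log 4 * (1 / log k + 1 / log k ^ 2) := by gcongr
    _ = _ := by
        rw [show (4 : ℝ) = 2 ^ 2 by norm_num, log_pow]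
        field_simp
        ring
end

section
/- Let f ∈ ℤ[x] be an irreducible polynomial with leading coefficient a, and let C : y² = f(x). For every squarefree integer d and all rational numbers x, y with y ≠ 0 such that (x, √d·y) lies on C, one has H(√d·y) ≥ |d|^{3/8} · |a|^{-1/2}; equivalently, log H(√d·y) ≥ (3/8) log|d| − (1/2) log|a|. -/
/-!
Write `y = y₀ / y₁` and `x = x₀ / x₁` in lowest terms and clear denominators in `d y² = f(x)`:
`d y₀² x₁³ = y₁² F(x₀, x₁)` with `F` the homogenised cubic. If a prime `p` divides `y₁` but not
the leading coefficient `a`, then `p ∣ x₁` (otherwise `p²` would divide the squarefree `d`), so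
`p ∤ F(x₀, x₁)` and `p³ ∣ y₁²`, i.e. `p² ∣ y₁`. Hence the squarefree `g = gcd(d, y₁²)` satisfies
`g² ∣ a² y₁`, and `H⁸ = max(|y₀| √|d|, y₁)⁸ / g⁴ ≥ |d|³ y₁² / (a⁴ y₁²) = |d|³ / a⁴`.
-/

open Polynomial

section Cubic

variable {R : Type*} [CommRing R]

theorem dvd_cubic_form_iff_of_dvd {p c₀ c₁ c₂ c₃ x₀ x₁ : R} (hpx : p ∣ x₁) :
    p ∣ c₃ * x₀ ^ 3 + c₂ * x₀ ^ 2 * x₁ + c₁ * x₀ * x₁ ^ 2 + c₀ * x₁ ^ 3 ↔ p ∣ c₃ * x₀ ^ 3 := by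
  obtain ⟨k, rfl⟩ := hpx
  rw [show c₃ * x₀ ^ 3 + c₂ * x₀ ^ 2 * (p * k) + c₁ * x₀ * (p * k) ^ 2 + c₀ * (p * k) ^ 3
      = c₃ * x₀ ^ 3 + p * (k * (c₂ * x₀ ^ 2 + c₁ * x₀ * (p * k) + c₀ * p ^ 2 * k ^ 2)) by ring]
  exact dvd_add_left (dvd_mul_right _ _)

variable [IsDomain R]

theorem sq_dvd_of_squarefree_mul_sq_eq_sq_mul_cubic_form
    {d c₀ c₁ c₂ c₃ x₀ x₁ y₀ y₁ p : R} (hd : Squarefree d) (hp : Prime p)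
    (hx : IsCoprime x₀ x₁) (hy : IsCoprime y₀ y₁)
    (h : d * y₀ ^ 2 * x₁ ^ 3 =
      y₁ ^ 2 * (c₃ * x₀ ^ 3 + c₂ * x₀ ^ 2 * x₁ + c₁ * x₀ * x₁ ^ 2 + c₀ * x₁ ^ 3))
    (hpy : p ∣ y₁) (hpc : ¬ p ∣ c₃) : p ^ 2 ∣ y₁ := by
  have hpy₀ : ¬ p ∣ y₀ := fun h' => hp.not_isUnit (hy.isUnit_of_dvd' h' hpy)
  have hpx₁ : p ∣ x₁ := by
    by_contra hpx₁
    have hp2 : p ^ 2 ∣ d * (y₀ ^ 2 * x₁ ^ 3) := by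
      rw [← mul_assoc, h]
      exact dvd_mul_of_dvd_left (pow_dvd_pow_of_dvd hpy 2) _
    have hpu : ¬ p ∣ y₀ ^ 2 * x₁ ^ 3 := by
      rw [hp.dvd_mul]
      exact not_or.2 ⟨mt hp.dvd_of_dvd_pow hpy₀, mt hp.dvd_of_dvd_pow hpx₁⟩
    exact hp.not_isUnit (hd p (sq p ▸ hp.pow_dvd_of_dvd_mul_right 2 hpu hp2))
  have hpx₀ : ¬ p ∣ x₀ := fun h' => hp.not_isUnit (hx.isUnit_of_dvd' h' hpx₁)
  have hpF : ¬ p ∣ c₃ * x₀ ^ 3 + c₂ * x₀ ^ 2 * x₁ + c₁ * x₀ * x₁ ^ 2 + c₀ * x₁ ^ 3 := by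
    rw [dvd_cubic_form_iff_of_dvd hpx₁, hp.dvd_mul]
    exact not_or.2 ⟨hpc, mt hp.dvd_of_dvd_pow hpx₀⟩
  have hp3 : p ^ (1 + 1 + 1) ∣ y₁ * y₁ := by
    refine hp.pow_dvd_of_dvd_mul_right 3 hpF ?_
    rw [← sq, ← h]
    exact dvd_mul_of_dvd_right (pow_dvd_pow_of_dvd hpx₁ 3) _
  -- `v_p(y₁ ^ 2) ≥ 3` forces `v_p(y₁) ≥ 2`
  have hpy' : p ^ 1 ∣ y₁ := (pow_one p).symm ▸ hpy
  exact (succ_dvd_or_succ_dvd_of_succ_sum_dvd_mul hp hpy' hpy' hp3).elim id id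

end Cubic

theorem Nat.sq_dvd_sq_mul_of_squarefree {g a y : ℕ} (hg : Squarefree g) (ha : a ≠ 0) (hy : y ≠ 0)
    (h : ∀ p, p.Prime → p ∣ g → ¬ p ∣ a → p ^ 2 ∣ y) : g ^ 2 ∣ a ^ 2 * y := by
  rw [← Nat.factorization_le_iff_dvd (pow_ne_zero 2 hg.ne_zero) (by positivity)]
  intro p
  simp only [Nat.factorization_pow, Nat.factorization_mul (pow_ne_zero 2 ha) hy,
    Finsupp.add_apply, Finsupp.smul_apply, smul_eq_mul]
  by_cases hpg : p.Prime ∧ p ∣ g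
  · obtain ⟨hp, hpg⟩ := hpg
    rw [Nat.factorization_eq_one_of_squarefree hg hp hpg]
    by_cases hpa : p ∣ a
    · have := (hp.dvd_iff_one_le_factorization ha).1 hpa
      omega
    · have := (hp.pow_dvd_iff_le_factorization hy).1 (h p hp hpg hpa)
      omega
  · have : g.factorization p = 0 := (Nat.factorization_eq_zero_iff g p).2 (by tauto)
    omega

theorem mul_num_sq_mul_den_pow_eq_of_mul_sq_eq_aeval {f : ℤ[X]} (hf : f.natDegree ≤ 3)
    {d : ℤ} {x y : ℚ} (h : (d : ℚ) * y ^ 2 = aeval x f) :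
    d * y.num ^ 2 * (x.den : ℤ) ^ 3 = (y.den : ℤ) ^ 2 * (f.coeff 3 * x.num ^ 3
      + f.coeff 2 * x.num ^ 2 * x.den + f.coeff 1 * x.num * x.den ^ 2 + f.coeff 0 * x.den ^ 3) := by
  rw [aeval_def, eval₂_eq_sum_range' _ (Nat.lt_succ_of_le hf)] at h
  simp only [Finset.sum_range_succ, Finset.sum_range_zero, algebraMap_int_eq, eq_intCast] at h
  apply Int.cast_injective (α := ℚ)
  push_cast
  rw [← x.mul_den_eq_num, ← y.mul_den_eq_num]
  linear_combination ((y.den : ℚ) ^ 2 * (x.den : ℚ) ^ 3) * h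

theorem rpow_mul_rpow_le_max_div_sqrt {D A G N Y : ℝ} (hD : 0 ≤ D) (hA : 0 < A) (hG : 0 < G)
    (hN : 1 ≤ N) (hGA : G ^ 2 ≤ A ^ 2 * Y) :
    D ^ ((3 : ℝ) / 8) * A ^ (-(1 : ℝ) / 2) ≤ max (N * √D) Y / √G := by
  set M := max (N * √D) Y
  have hDM : √D ≤ M := le_max_of_le_left (le_mul_of_one_le_left (Real.sqrt_nonneg D) hN)
  have hYM : Y ≤ M := le_max_right _ _
  have hY : 0 ≤ Y := nonneg_of_mul_nonneg_right ((sq_nonneg G).trans hGA) (pow_pos hA 2)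
  have hD8 : (D ^ ((3 : ℝ) / 8)) ^ 8 = √D ^ 6 := by
    rw [← Real.rpow_mul_natCast hD, Real.sqrt_eq_rpow, ← Real.rpow_mul_natCast hD]
    norm_num
  have hA8 : (A ^ (-(1 : ℝ) / 2)) ^ 8 = (A ^ 4)⁻¹ := by
    rw [← Real.rpow_mul_natCast hA.le, ← Real.rpow_natCast, ← Real.rpow_neg hA.le]
    norm_num
  have hG8 : √G ^ 8 = (G ^ 2) ^ 2 := by
    rw [show 8 = 2 * 2 * 2 by rfl, pow_mul, pow_mul, Real.sq_sqrt hG.le]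
  rw [le_div_iff₀ (Real.sqrt_pos.2 hG)]
  refine le_of_pow_le_pow_left₀ (n := 8) (by norm_num) (hY.trans hYM) ?_
  calc (D ^ ((3 : ℝ) / 8) * A ^ (-(1 : ℝ) / 2) * √G) ^ 8 = √D ^ 6 * (G ^ 2) ^ 2 / A ^ 4 := by
        rw [mul_pow, mul_pow, hD8, hA8, hG8, div_eq_mul_inv]; ring
    _ ≤ √D ^ 6 * (A ^ 2 * Y) ^ 2 / A ^ 4 := by gcongr
    _ = √D ^ 6 * Y ^ 2 := by field_simp
    _ ≤ M ^ 6 * M ^ 2 := by gcongr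
    _ = M ^ 8 := by ring

theorem stmt10_general (f : Polynomial ℤ) (hdeg : f.natDegree = 3)
    (d : ℤ) (hd : Squarefree d)
    (x y : ℚ) (hy : y ≠ 0)
    (hcurve : (d : ℚ) * y ^ 2 = Polynomial.aeval x (f.map (Int.castRingHom ℚ))) :
    ((|d| : ℝ)) ^ ((3 : ℝ) / 8) * ((|f.leadingCoeff| : ℝ)) ^ (-(1 : ℝ) / 2)
      ≤ max ((|y.num| : ℝ) * Real.sqrt |(d : ℝ)|) ((y.den : ℝ))
          / Real.sqrt (Int.gcd d ((y.den : ℤ) ^ 2)) := by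
  have ha : f.leadingCoeff = f.coeff 3 := by rw [leadingCoeff, hdeg]
  have ha0 : f.coeff 3 ≠ 0 :=
    ha ▸ leadingCoeff_ne_zero.2 (ne_zero_of_natDegree_gt (n := 0) (by omega))
  rw [show Int.castRingHom ℚ = algebraMap ℤ ℚ from rfl, aeval_map_algebraMap] at hcurve
  have hint := mul_num_sq_mul_den_pow_eq_of_mul_sq_eq_aeval hdeg.le hcurve
  set G := Int.gcd d ((y.den : ℤ) ^ 2)
  have hGd : (G : ℤ) ∣ d := Int.gcd_dvd_left _ _
  have hG : G ^ 2 ∣ (f.coeff 3).natAbs ^ 2 * y.den := by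
    refine Nat.sq_dvd_sq_mul_of_squarefree (Int.squarefree_natCast.1 (hd.squarefree_of_dvd hGd))
      (Int.natAbs_ne_zero.2 ha0) y.den_nz fun p hp hpG hpa => ?_
    have hpy : (p : ℤ) ∣ y.den := (Nat.prime_iff_prime_int.1 hp).dvd_of_dvd_pow
      ((Int.natCast_dvd_natCast.2 hpG).trans (Int.gcd_dvd_right _ _))
    exact_mod_cast sq_dvd_of_squarefree_mul_sq_eq_sq_mul_cubic_form hd
      (Nat.prime_iff_prime_int.1 hp) x.isCoprime_num_den y.isCoprime_num_den hint hpy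
      (fun h => hpa (Int.natCast_dvd.1 h))
  have hG0 : 0 < G := Int.gcd_pos_of_ne_zero_left _ hd.ne_zero
  have hGA : (G : ℝ) ^ 2 ≤ |(f.leadingCoeff : ℝ)| ^ 2 * y.den := by
    rw [ha, ← Int.cast_abs, ← Nat.cast_natAbs]
    exact_mod_cast Nat.le_of_dvd (by positivity) hG
  exact rpow_mul_rpow_le_max_div_sqrt (abs_nonneg _) (by simpa [ha] using ha0)
    (by exact_mod_cast hG0) (by exact_mod_cast Int.one_le_abs (Rat.num_ne_zero.2 hy)) hGA

/-- Let `f ∈ ℤ[x]` be an irreducible polynomial of degree `3` with leading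
coefficient `a`, and let `C : y² = f(x)`. For every squarefree integer `d` and all rational
numbers `x, y` with `y ≠ 0` such that `(x, √d·y)` lies on `C` (i.e. `d y² = f(x)`), the
absolute multiplicative height `H(√d·y) = max(|y₀|·|d|^{1/2}, |y₁|)/√gcd(d, y₁²)` (where
`y = y₀/y₁` in lowest terms) satisfies `H(√d·y) ≥ |d|^{3/8} · |a|^{-1/2}`. -/
theorem stmt10 (f : Polynomial ℤ) (hdeg : f.natDegree = 3)
    (hirr : Irreducible (f.map (Int.castRingHom ℚ)))
    (d : ℤ) (hd : Squarefree d)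
    (x y : ℚ) (hy : y ≠ 0)
    (hcurve : (d : ℚ) * y ^ 2 = Polynomial.aeval x (f.map (Int.castRingHom ℚ))) :
    ((|d| : ℝ)) ^ ((3 : ℝ) / 8) * ((|f.leadingCoeff| : ℝ)) ^ (-(1 : ℝ) / 2)
      ≤ max ((|y.num| : ℝ) * Real.sqrt |(d : ℝ)|) ((y.den : ℝ))
          / Real.sqrt (Int.gcd d ((y.den : ℤ) ^ 2)) :=
  stmt10_general f hdeg d hd x y hy hcurve
end
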